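/- arXiv:1006.1372 — 10 statements merged into one kernel-verified Lean document; each statement's English description precedes it below -/
import Mathlib

section
/- Let c < 0 and θ₀ ∈ ℝ with θ₀ ≠ 0. Then there exists ε₀ > 0 such that for all 0 < ε < ε₀ and all real λ ≥ 0 one has D_ε(λ) ≠ 0, where D_ε(λ) = ε² − (θ₀ + 2i·s₀(λ))·(2(1 + i·s₁(λ)) + cε), with s₀(λ) = √λ and s₁(λ) = √(λ−1) for λ ≥ 1, s₁(λ) = i·√(1−λ) for 0 ≤ λ < 1. (This is the d = 1 statement that the perturbed Hamiltonian has no eigenvalues embedded in [0,∞) or at the threshold.) -/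
open Complex

/-!
Write `D = ε² − (θ₀ + 2ia)(2(1 + i s₁) + cε)` with `a = √λ`.
Above the threshold (`λ ≥ 1`, `s₁ = b ≥ 0` real) and with `κ = 2 + cε > 0`, the real and
imaginary parts of `D = 0` combine to `ε²b + aκ² + 4ab² = 0`, impossible since `a > 0`.
Below it (`s₁ = it`) the second factor `w = 2(1 − t) + cε` is real, so `D = 0` means `aw = 0`
and `ε² = θ₀w`; as `ε ≠ 0` this forces `a = 0`, i.e. `λ = 0`, `t = 1`, and then `ε = θ₀c`.
Both are excluded once `ε < min (-2/c) |θ₀c|`.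
-/

noncomputable def resolventDenom (θ₀ c ε : ℝ) (s₀ s₁ : ℂ) : ℂ :=
  (ε : ℂ) ^ 2 - ((θ₀ : ℂ) + 2 * I * s₀) * (2 * (1 + I * s₁) + (c : ℂ) * (ε : ℂ))

section

variable {θ₀ c ε : ℝ}

theorem resolventDenom_ne_zero_of_real {a b : ℝ} (ha : 0 < a) (hb : 0 ≤ b)
    (hκ : 0 < 2 + c * ε) : resolventDenom θ₀ c ε a b ≠ 0 := by
  intro h
  have hre := congrArg re h
  have him := congrArg im h
  simp only [resolventDenom, ← ofReal_pow, sub_re, sub_im, mul_re, mul_im, add_re, add_im,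
    ofReal_re, ofReal_im, I_re, I_im, re_ofNat, im_ofNat, one_re, one_im, zero_re, zero_im] at hre him
  have key : ε ^ 2 * b + a * (2 + c * ε) ^ 2 + 4 * a * b ^ 2 = 0 := by
    linear_combination b * hre - (2 + c * ε) / 2 * him
  nlinarith [mul_pos ha (pow_pos hκ 2), mul_nonneg (sq_nonneg ε) hb,
    mul_nonneg ha.le (sq_nonneg b)]

theorem resolventDenom_ne_zero_of_imaginary {lam : ℝ} (hlam : 0 ≤ lam) (hε : ε ≠ 0)
    (hεc : ε ≠ θ₀ * c) :
    resolventDenom θ₀ c ε (Real.sqrt lam) (I * (Real.sqrt (1 - lam) : ℝ)) ≠ 0 := by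
  intro h
  have hre := congrArg re h
  have him := congrArg im h
  simp only [resolventDenom, ← ofReal_pow, sub_re, sub_im, mul_re, mul_im, add_re, add_im,
    ofReal_re, ofReal_im, I_re, I_im, re_ofNat, im_ofNat, one_re, one_im, zero_re, zero_im] at hre him
  set w := 2 * (1 - Real.sqrt (1 - lam)) + c * ε
  have hεw : ε ^ 2 = θ₀ * w := by linear_combination hre
  have haw : Real.sqrt lam * w = 0 := by linear_combination -him / 2
  rcases mul_eq_zero.mp haw with ha | hw
  · have hlam0 : lam = 0 := le_antisymm (Real.sqrt_eq_zero'.mp ha) hlam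
    have hw : w = c * ε := by simp [w, hlam0]
    refine hεc (mul_left_cancel₀ hε ?_)
    linear_combination hεw + θ₀ * hw
  · exact hε (pow_eq_zero_iff two_ne_zero |>.mp (by rw [hεw, hw, mul_zero]))

end

/-- d = 1: for `c < 0` and `θ₀ ≠ 0`, for small `ε` the resolvent denominator
`D_ε(λ) = ε² − (θ₀ + 2i·√λ)(2(1 + i·s₁(λ)) + cε)` has no zeros for `λ ≥ 0`,
where `s₁(λ) = √(λ−1)` for `λ ≥ 1` and `s₁(λ) = i√(1−λ)` for `0 ≤ λ < 1`;
i.e. no embedded or threshold eigenvalues. -/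
theorem no_embedded_eigenvalues_d1 (c θ₀ : ℝ) (hc : c < 0) (hθ : θ₀ ≠ 0) :
    ∃ ε₀ > (0 : ℝ), ∀ ε : ℝ, 0 < ε → ε < ε₀ → ∀ lam : ℝ, 0 ≤ lam →
      ((ε : ℂ) ^ 2 -
        ((θ₀ : ℂ) + 2 * Complex.I * (Real.sqrt lam : ℂ)) *
          (2 * (1 + Complex.I *
            (if 1 ≤ lam then ((Real.sqrt (lam - 1) : ℝ) : ℂ)
             else Complex.I * ((Real.sqrt (1 - lam) : ℝ) : ℂ))) + (c : ℂ) * (ε : ℂ)))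
      ≠ 0 := by
  refine ⟨min (-2 / c) |θ₀ * c|,
    lt_min (div_pos_of_neg_of_neg (by norm_num) hc) (abs_pos.mpr (mul_ne_zero hθ hc.ne)), ?_⟩
  intro ε hε hε₀ lam hlam
  have hκ : 0 < 2 + c * ε := by
    have := (lt_div_iff_of_neg hc).mp (hε₀.trans_le (min_le_left _ _))
    linarith
  have hεc : ε ≠ θ₀ * c := fun h => by
    have := hε₀.trans_le (min_le_right _ _)
    rw [h, abs_of_pos (h ▸ hε)] at this
    exact lt_irrefl _ this
  change resolventDenom θ₀ c ε (Real.sqrt lam) (if 1 ≤ lam then _ else _) ≠ 0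
  split_ifs with hlam1
  · exact resolventDenom_ne_zero_of_real (Real.sqrt_pos.mpr (by linarith))
      (Real.sqrt_nonneg _) hκ
  · exact resolventDenom_ne_zero_of_imaginary hlam hε.ne' hεc
end

section
/- Let c < 0. Consider the equation −θ₀ + 2√λ = −ε²/(2(1 − √(λ+1)) − |c|ε) for λ > 0. Then there exists ε₀ > 0 such that for all 0 < ε < ε₀: if θ₀ < 0 the equation has no solution λ > 0; if θ₀ > 0 the equation has exactly one solution λ_{0,ε} > 0, and this solution satisfies λ_{0,ε} > θ₀²/4. Consequently, for θ₀ ≠ 0 the equation has no solutions in the interval (0, θ₀²/4). -/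
lemma my_rw (d ε lam : ℝ) :
    -ε ^ 2 / (2 * (1 - Real.sqrt (lam + 1)) - d * ε) =
      ε ^ 2 / (2 * (Real.sqrt (lam + 1) - 1) + d * ε) := by
  rw [show 2 * (1 - Real.sqrt (lam + 1)) - d * ε
      = -(2 * (Real.sqrt (lam + 1) - 1) + d * ε) by ring, neg_div_neg_eq]

lemma my_sqrt_ge (lam : ℝ) (h : 0 ≤ lam) : 1 ≤ Real.sqrt (lam + 1) := by
  nlinarith [Real.sq_sqrt (show (0:ℝ) ≤ lam + 1 by linarith),
    Real.sqrt_nonneg (lam + 1)]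

lemma my_Dpos (d ε lam : ℝ) (hd : 0 < d) (hε : 0 < ε) (h : 0 ≤ lam) :
    0 < 2 * (Real.sqrt (lam + 1) - 1) + d * ε := by
  have := my_sqrt_ge lam h
  nlinarith

lemma my_bound (d ε lam : ℝ) (hd : 0 < d) (hε : 0 < ε) (h : 0 ≤ lam) :
    ε ^ 2 / (2 * (Real.sqrt (lam + 1) - 1) + d * ε) ≤ ε / d := by
  have h1 := my_sqrt_ge lam h
  have h2 : 0 < d * ε := by positivity
  have h3 : d * ε ≤ 2 * (Real.sqrt (lam + 1) - 1) + d * ε := by nlinarith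
  calc ε ^ 2 / (2 * (Real.sqrt (lam + 1) - 1) + d * ε)
      ≤ ε ^ 2 / (d * ε) := div_le_div_of_nonneg_left (by positivity) h2 h3
    _ = ε / d := by field_simp

/-- d = 1, c < 0: the negative-eigenvalue equation
`−θ₀ + 2√λ = −ε²/(2(1 − √(λ+1)) − |c|ε)` (λ > 0) has, for small ε,
no solution if `θ₀ < 0`, and exactly one solution if `θ₀ > 0`, which moreover
satisfies `λ > θ₀²/4`; consequently for `θ₀ ≠ 0` there are no solutions in
`(0, θ₀²/4)`. -/
theorem isolated_eigenvalue_equation_d1 (c θ₀ : ℝ) (hc : c < 0) :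
    ∃ ε₀ > (0 : ℝ), ∀ ε : ℝ, 0 < ε → ε < ε₀ →
      ((θ₀ < 0 → ∀ lam : ℝ, 0 < lam →
          -θ₀ + 2 * Real.sqrt lam ≠
            -ε ^ 2 / (2 * (1 - Real.sqrt (lam + 1)) - |c| * ε)) ∧
       (θ₀ > 0 → (∃! lam : ℝ, 0 < lam ∧
          -θ₀ + 2 * Real.sqrt lam =
            -ε ^ 2 / (2 * (1 - Real.sqrt (lam + 1)) - |c| * ε)) ∧
          (∀ lam : ℝ, 0 < lam →
            -θ₀ + 2 * Real.sqrt lam =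
              -ε ^ 2 / (2 * (1 - Real.sqrt (lam + 1)) - |c| * ε) →
            θ₀ ^ 2 / 4 < lam)) ∧
       (θ₀ ≠ 0 → ∀ lam : ℝ, 0 < lam → lam < θ₀ ^ 2 / 4 →
          -θ₀ + 2 * Real.sqrt lam ≠
            -ε ^ 2 / (2 * (1 - Real.sqrt (lam + 1)) - |c| * ε))) := by
  set d : ℝ := |c| with hdd
  have hd : 0 < d := abs_pos.mpr hc.ne
  refine ⟨if θ₀ < 0 then d * (-θ₀) else 1, ?_, ?_⟩
  · by_cases h : θ₀ < 0
    · simp only [if_pos h]; nlinarith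
    · simp only [if_neg h]; norm_num
  intro ε hε hεlt
  -- Part 1: no solution when θ₀ < 0
  have part1 : θ₀ < 0 → ∀ lam : ℝ, 0 < lam →
      -θ₀ + 2 * Real.sqrt lam ≠
        -ε ^ 2 / (2 * (1 - Real.sqrt (lam + 1)) - d * ε) := by
    intro hθ lam hlam heq
    rw [my_rw] at heq
    have hεsmall : ε < d * (-θ₀) := by rwa [if_pos hθ] at hεlt
    have hb := my_bound d ε lam hd hε hlam.le
    have hs : 0 < Real.sqrt lam := Real.sqrt_pos.mpr hlam
    have : ε / d < -θ₀ := by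
      rw [div_lt_iff₀ hd]; nlinarith
    linarith [heq ▸ hb]
  refine ⟨part1, ?_, ?_⟩
  · -- Part 2
    intro hθ
    have h4 : ∀ lam : ℝ, 0 < lam →
        -θ₀ + 2 * Real.sqrt lam =
          -ε ^ 2 / (2 * (1 - Real.sqrt (lam + 1)) - d * ε) →
        θ₀ ^ 2 / 4 < lam := by
      intro lam hlam heq
      rw [my_rw] at heq
      have hD := my_Dpos d ε lam hd hε hlam.le
      have hpos : 0 < ε ^ 2 / (2 * (Real.sqrt (lam + 1) - 1) + d * ε) := by positivity
      have hs : θ₀ / 2 < Real.sqrt lam := by linarith [heq ▸ hpos]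
      have hsq := Real.sq_sqrt hlam.le
      nlinarith
    refine ⟨?_, h4⟩
    -- existence via IVT
    set F : ℝ → ℝ := fun l =>
      -θ₀ + 2 * Real.sqrt l - ε ^ 2 / (2 * (Real.sqrt (l + 1) - 1) + d * ε) with hF
    set M : ℝ := (θ₀ + ε / d) ^ 2 with hM
    have hMnn : 0 ≤ θ₀ + ε / d := by positivity
    have hM0 : (0:ℝ) ≤ M := sq_nonneg _
    have hcont : ContinuousOn F (Set.Icc 0 M) := by
      apply ContinuousOn.sub
      · fun_prop
      · exact continuousOn_const.div
          (by fun_prop)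
          (fun x hx => (my_Dpos d ε x hd hε hx.1).ne')
    have hF0 : F 0 < 0 := by
      simp only [hF]
      rw [Real.sqrt_zero, zero_add, Real.sqrt_one]
      have : 0 < ε ^ 2 / (2 * ((1:ℝ) - 1) + d * ε) := by
        rw [show 2 * ((1:ℝ) - 1) + d * ε = d * ε by ring]; positivity
      linarith
    have hFM : 0 < F M := by
      have hb := my_bound d ε M hd hε hM0
      have hsq : Real.sqrt M = θ₀ + ε / d := Real.sqrt_sq hMnn
      simp only [hF, hsq]
      have : 0 < ε / d := by positivity
      linarith
    obtain ⟨l, hlmem, hFl⟩ := intermediate_value_Icc hM0 hcont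
      ⟨hF0.le, hFM.le⟩
    have hlpos : 0 < l := by
      rcases lt_or_eq_of_le hlmem.1 with h | h
      · exact h
      · exact absurd (h ▸ hFl) (by rw [← h] at hFl ⊢; linarith)
    have hsol : -θ₀ + 2 * Real.sqrt l =
        -ε ^ 2 / (2 * (1 - Real.sqrt (l + 1)) - d * ε) := by
      rw [my_rw]; simp only [hF] at hFl; linarith
    refine ⟨l, ⟨hlpos, hsol⟩, ?_⟩
    -- uniqueness
    intro y ⟨hypos, hysol⟩
    rw [my_rw] at hysol
    have hlsol := hsol; rw [my_rw] at hlsol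
    have key : ∀ a b : ℝ, 0 < a → 0 < b → a < b →
        -θ₀ + 2 * Real.sqrt a = ε ^ 2 / (2 * (Real.sqrt (a + 1) - 1) + d * ε) →
        -θ₀ + 2 * Real.sqrt b = ε ^ 2 / (2 * (Real.sqrt (b + 1) - 1) + d * ε) →
        False := by
      intro a b ha hb hab heqa heqb
      have hsab : Real.sqrt a < Real.sqrt b := Real.sqrt_lt_sqrt ha.le hab
      have hsab1 : Real.sqrt (a + 1) ≤ Real.sqrt (b + 1) :=
        Real.sqrt_le_sqrt (by linarith)
      have hDa := my_Dpos d ε a hd hε ha.le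
      have hdiv : ε ^ 2 / (2 * (Real.sqrt (b + 1) - 1) + d * ε) ≤
          ε ^ 2 / (2 * (Real.sqrt (a + 1) - 1) + d * ε) :=
        div_le_div_of_nonneg_left (by positivity) hDa (by linarith)
      linarith
    rcases lt_trichotomy y l with h | h | h
    · exact (key y l hypos hlpos h hysol hlsol).elim
    · exact h
    · exact (key l y hlpos hypos h hlsol hysol).elim
  · -- Part 3
    intro hθ lam hlam hlt heq
    rcases lt_or_gt_of_ne hθ with h | h
    · exact part1 h lam hlam heq
    · rw [my_rw] at heq
      have hD := my_Dpos d ε lam hd hε hlam.le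
      have hpos : 0 < ε ^ 2 / (2 * (Real.sqrt (lam + 1) - 1) + d * ε) := by positivity
      have hs : Real.sqrt lam < θ₀ / 2 := by
        have : Real.sqrt lam < Real.sqrt (θ₀ ^ 2 / 4) := Real.sqrt_lt_sqrt hlam.le hlt
        rwa [show θ₀ ^ 2 / 4 = (θ₀ / 2) ^ 2 by ring,
          Real.sqrt_sq (by linarith)] at this
      linarith
end

section
/- Let a = 2π/(ln 2 − γ), where γ is the Euler–Mascheroni constant, let c < 0 and θ₀ ∈ ℝ with θ₀ ≠ 0. Then there exists ε₀ > 0 such that for all 0 < ε < ε₀ and all real λ > 0 one has D_ε(λ) ≠ 0, where D_ε(λ) = {a + cε + (θ₀(a+cε) − ε²)·g₀(λ)}·{θ₀ + (θ₀(a+cε) − ε²)·g₁(λ)} − ε², with g₀(λ) = ln λ/(4π) − i/4 − 1/a, and g₁(λ) = ln(λ−1)/(4π) − i/4 − 1/a for λ > 1, g₁(λ) = ln(1−λ)/(4π) − 1/a for 0 < λ < 1. (This is the d = 2 statement that the perturbed Hamiltonian has no embedded eigenvalues in (0,∞).) -/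
open Complex Real

/-- d = 2: for `c < 0`, `θ₀ ≠ 0` and small `ε`, the resolvent denominator
`D_ε(λ) = {a + cε + (θ₀(a+cε) − ε²)g₀(λ)}{θ₀ + (θ₀(a+cε) − ε²)g₁(λ)} − ε²`
has no zeros for real `λ > 0`, where `a = 2π/(ln 2 − γ)`,
`g₀(λ) = ln λ/(4π) − i/4 − 1/a` and `g₁(λ) = ln(λ−1)/(4π) − i/4 − 1/a` for
`λ > 1`, `g₁(λ) = ln(1−λ)/(4π) − 1/a` for `0 < λ < 1`:
no embedded eigenvalues. -/
theorem no_embedded_eigenvalues_d2 (a c θ₀ : ℝ)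
    (ha : a = 2 * Real.pi / (Real.log 2 - Real.eulerMascheroniConstant))
    (hc : c < 0) (hθ : θ₀ ≠ 0) :
    ∃ ε₀ > (0 : ℝ), ∀ ε : ℝ, 0 < ε → ε < ε₀ → ∀ lam : ℝ, 0 < lam →
      (((a + c * ε : ℝ) : ℂ) +
          ((θ₀ * (a + c * ε) - ε ^ 2 : ℝ) : ℂ) *
            (((Real.log lam / (4 * Real.pi) : ℝ) : ℂ) - Complex.I / 4 - ((1 / a : ℝ) : ℂ))) *
        ((θ₀ : ℂ) +
          ((θ₀ * (a + c * ε) - ε ^ 2 : ℝ) : ℂ) *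
            (if 1 < lam then
              ((Real.log (lam - 1) / (4 * Real.pi) : ℝ) : ℂ) - Complex.I / 4 - ((1 / a : ℝ) : ℂ)
             else
              ((Real.log (1 - lam) / (4 * Real.pi) : ℝ) : ℂ) - ((1 / a : ℝ) : ℂ))) -
        ((ε : ℂ)) ^ 2 ≠ 0 := by
  have hlog : (0.6931471803 : ℝ) < Real.log 2 := Real.log_two_gt_d9
  have hγ : Real.eulerMascheroniConstant < 2/3 := Real.eulerMascheroniConstant_lt_two_thirds
  have hden : 0 < Real.log 2 - Real.eulerMascheroniConstant := by linarith
  have hapos : 0 < a := by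
    rw [ha]; positivity
  refine ⟨min 1 (|θ₀| * a / (2 * (|θ₀ * c| + 1))), ?_, ?_⟩
  · have : 0 < |θ₀| * a / (2 * (|θ₀ * c| + 1)) := by
      have h1 : 0 < |θ₀| := abs_pos.2 hθ
      positivity
    exact lt_min one_pos this
  intro ε hε hεlt lam hlam
  have hε1 : ε < 1 := lt_of_lt_of_le hεlt (min_le_left _ _)
  have hε2 : ε < |θ₀| * a / (2 * (|θ₀ * c| + 1)) := lt_of_lt_of_le hεlt (min_le_right _ _)
  have hε2' : ε * (2 * (|θ₀ * c| + 1)) < |θ₀| * a := by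
    rw [lt_div_iff₀ (by positivity)] at hε2; linarith
  obtain ⟨s, hs_def⟩ : ∃ s : ℝ, θ₀ * (a + c * ε) - ε ^ 2 = s := ⟨_, rfl⟩
  rw [hs_def]
  have hs : s ≠ 0 := by
    intro h
    rcases abs_cases θ₀ with ⟨h1, h2⟩ | ⟨h1, h2⟩ <;>
      rcases abs_cases (θ₀ * c) with ⟨h3, h4⟩ | ⟨h3, h4⟩ <;>
      nlinarith [sq_nonneg ε, hε.le, hε1.le]
  intro hD
  by_cases h1 : 1 < lam
  · rw [if_pos h1] at hD
    obtain ⟨P, hP⟩ : ∃ P : ℝ, a + c * ε + s * (Real.log lam / (4 * Real.pi) - 1 / a) = P := ⟨_, rfl⟩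
    obtain ⟨Q, hQ⟩ : ∃ Q : ℝ, θ₀ + s * (Real.log (lam - 1) / (4 * Real.pi) - 1 / a) = Q := ⟨_, rfl⟩
    have hform : (((a + c * ε : ℝ) : ℂ) +
          ((s : ℝ) : ℂ) *
            (((Real.log lam / (4 * Real.pi) : ℝ) : ℂ) - Complex.I / 4 - ((1 / a : ℝ) : ℂ))) *
        ((θ₀ : ℂ) +
          ((s : ℝ) : ℂ) *
            (((Real.log (lam - 1) / (4 * Real.pi) : ℝ) : ℂ) - Complex.I / 4 - ((1 / a : ℝ) : ℂ))) -
        ((ε : ℂ)) ^ 2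
        = (((P * Q - s^2/16 - ε^2 : ℝ)) : ℂ)
          - Complex.I * (((s * (P + Q) / 4 : ℝ) : ℂ)) := by
      rw [← hP, ← hQ]
      push_cast
      ring_nf
      simp [Complex.I_sq]
      ring
    rw [hform] at hD
    rw [Complex.ext_iff] at hD
    simp only [Complex.sub_re, Complex.sub_im, Complex.ofReal_re, Complex.ofReal_im,
      Complex.mul_re, Complex.mul_im, Complex.I_re, Complex.I_im, Complex.zero_re,
      Complex.zero_im] at hD
    obtain ⟨hre, him⟩ := hD
    have hPQ : P + Q = 0 := by
      have : s * (P + Q) = 0 := by linear_combination (-4 : ℝ) * him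
      rcases mul_eq_zero.1 this with h' | h'
      · exact absurd h' hs
      · exact h'
    have hQ' : Q = -P := by linarith
    rw [hQ'] at hre
    nlinarith [sq_nonneg P, mul_self_pos.2 hs, mul_pos hε hε]
  · rw [if_neg h1] at hD
    obtain ⟨P, hP⟩ : ∃ P : ℝ, a + c * ε + s * (Real.log lam / (4 * Real.pi) - 1 / a) = P := ⟨_, rfl⟩
    obtain ⟨Q, hQ⟩ : ∃ Q : ℝ, θ₀ + s * (Real.log (1 - lam) / (4 * Real.pi) - 1 / a) = Q := ⟨_, rfl⟩
    have hform : (((a + c * ε : ℝ) : ℂ) +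
          ((s : ℝ) : ℂ) *
            (((Real.log lam / (4 * Real.pi) : ℝ) : ℂ) - Complex.I / 4 - ((1 / a : ℝ) : ℂ))) *
        ((θ₀ : ℂ) +
          ((s : ℝ) : ℂ) *
            (((Real.log (1 - lam) / (4 * Real.pi) : ℝ) : ℂ) - ((1 / a : ℝ) : ℂ))) -
        ((ε : ℂ)) ^ 2
        = (((P * Q - ε^2 : ℝ)) : ℂ)
          - Complex.I * (((s * Q / 4 : ℝ) : ℂ)) := by
      rw [← hP, ← hQ]
      push_cast
      ring
    rw [hform] at hD
    rw [Complex.ext_iff] at hD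
    simp only [Complex.sub_re, Complex.sub_im, Complex.ofReal_re, Complex.ofReal_im,
      Complex.mul_re, Complex.mul_im, Complex.I_re, Complex.I_im, Complex.zero_re,
      Complex.zero_im] at hD
    obtain ⟨hre, him⟩ := hD
    have hQ0 : Q = 0 := by
      have : s * Q = 0 := by linear_combination (-4 : ℝ) * him
      rcases mul_eq_zero.1 this with h' | h'
      · exact absurd h' hs
      · exact h'
    rw [hQ0] at hre
    nlinarith [mul_pos hε hε]
end

section
/- Let a = 2π/(ln 2 − γ), where γ is the Euler–Mascheroni constant, let c < 0 and θ₀ > 0. Consider the equation θ₀ + (θ₀(a+cε) − ε²)·(ln(1+λ)/(4π) − 1/a) = ε²/(a + cε + (θ₀(a+cε) − ε²)·(ln λ/(4π) − 1/a)) for λ > 0, and set λ_{a,ε} = exp[4π((θ₀/a − 1)(a − |c|ε) − ε²/a)/(θ₀(a − |c|ε) − ε²)]. Then there exist C > 0 and ε₀ > 0 such that for all 0 < ε < ε₀ the equation has exactly one solution λ_ε > 0; this solution lies in (λ_{a,ε}, ∞) and satisfies |λ_ε − e^{4π(1/a − 1/θ₀)}| ≤ Cε, and there are no solutions in (0, λ_{a,ε}).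 -/
/-!
With `K = θ₀(a + cε) − ε²`, the left side of the equation is
`P(λ) = θ₀ − K/a + (K/4π) log(1 + λ) > 0` and the denominator on the right is
`Q(λ) = (K/4π)(log λ − log λ_{a,ε})`, so the equation says `P Q = ε²`. This forces
`λ > λ_{a,ε}`, and on `[λ_{a,ε}, ∞)` the product `P Q` increases strictly from `0`.
Moreover `log λ_{a,ε} = log L − 4πε²/(θ₀K)` with `L = e^{4π(1/a − 1/θ₀)}`, so
`λ_{a,ε} ≥ L − O(ε)`, while `Q` grows linearly past `L`, giving `P Q ≥ ε²` at `L + O(ε)`.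
The intermediate value theorem and monotonicity then trap the unique solution in
`(λ_{a,ε}, L + O(ε)]`.
-/

open Real Set

/-- The product `P Q` of the header, with `p = θ₀ − K/a`, `κ = K/4π` and `ℓ = log λ_{a,ε}`. -/
noncomputable def logProduct (p κ ℓ x : ℝ) : ℝ :=
  (p + κ * log (1 + x)) * (κ * (log x - ℓ))

section LogProduct

variable {p κ ℓ : ℝ}

lemma logProduct_exp : logProduct p κ ℓ (exp ℓ) = 0 := by
  simp [logProduct]

lemma add_mul_log_one_add_pos (hp : 0 ≤ p) (hκ : 0 < κ) {x : ℝ} (hx : 0 < x) :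
    0 < p + κ * log (1 + x) := by
  have := log_pos (by linarith : 1 < 1 + x)
  positivity

lemma strictMonoOn_logProduct (hp : 0 ≤ p) (hκ : 0 < κ) :
    StrictMonoOn (logProduct p κ ℓ) (Ici (exp ℓ)) := by
  intro x hx y hy hxy
  have hx0 : 0 < x := (exp_pos ℓ).trans_le hx
  have hQx : 0 ≤ κ * (log x - ℓ) :=
    mul_nonneg hκ.le (sub_nonneg.2 ((le_log_iff_exp_le hx0).2 hx))
  refine mul_lt_mul' ?_ ?_ hQx (add_mul_log_one_add_pos hp hκ (hx0.trans hxy)) <;> gcongr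

lemma continuousOn_logProduct : ContinuousOn (logProduct p κ ℓ) (Ioi 0) := by
  intro x (hx : 0 < x)
  unfold logProduct
  fun_prop (disch := positivity)

lemma exp_lt_of_logProduct_pos (hp : 0 ≤ p) (hκ : 0 < κ) {x : ℝ} (hx : 0 < x)
    (h : 0 < logProduct p κ ℓ x) : exp ℓ < x := by
  have hQ := pos_of_mul_pos_right h (add_mul_log_one_add_pos hp hκ hx).le
  rw [← lt_log_iff_exp_lt hx]
  linarith [pos_of_mul_pos_right hQ hκ.le]

lemma existsUnique_logProduct_eq (hp : 0 ≤ p) (hκ : 0 < κ) {e x₁ : ℝ} (he : 0 < e)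
    (hx₁ : exp ℓ ≤ x₁) (h : e ≤ logProduct p κ ℓ x₁) :
    ∃! x, 0 < x ∧ logProduct p κ ℓ x = e := by
  have hcont : ContinuousOn (logProduct p κ ℓ) (Icc (exp ℓ) x₁) :=
    continuousOn_logProduct.mono fun y hy => (exp_pos ℓ).trans_le hy.1
  obtain ⟨x, hx, hfx⟩ :=
    intermediate_value_Icc hx₁ hcont ⟨logProduct_exp.symm ▸ he.le, h⟩
  refine ⟨x, ⟨(exp_pos ℓ).trans_le hx.1, hfx⟩, fun y ⟨hy, hfy⟩ => ?_⟩
  exact (strictMonoOn_logProduct hp hκ).injOn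
    (exp_lt_of_logProduct_pos hp hκ hy (hfy ▸ he)).le hx.1 (hfy.trans hfx.symm)

lemma div_le_log_add_sub_log {L t : ℝ} (hL : 0 < L) (ht : 0 ≤ t) (htL : t ≤ 2 * L) :
    t / (2 * L) ≤ log (L + t) - log L := by
  have hx : 0 ≤ t / L := div_nonneg ht hL.le
  rw [← log_div (by positivity) hL.ne', add_div, div_self hL.ne']
  refine le_trans ?_ (le_log_one_add_of_nonneg hx)
  rw [div_le_div_iff₀ (by positivity) (by positivity)]
  have : t / L ≤ 2 := (div_le_iff₀ hL).2 (by linarith)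
  field_simp
  nlinarith

lemma le_logProduct_add (hp : 0 ≤ p) (hκ : 0 < κ) {L t : ℝ} (hL : 0 < L) (ht : 0 ≤ t)
    (htL : t ≤ 2 * L) (hℓ : ℓ ≤ log L) :
    κ ^ 2 * log (1 + L) * t / (2 * L) ≤ logProduct p κ ℓ (L + t) := by
  have hP : κ * log (1 + L) ≤ p + κ * log (1 + (L + t)) := by
    have : log (1 + L) ≤ log (1 + (L + t)) := log_le_log (by linarith) (by linarith)
    nlinarith
  have hQ : κ * (t / (2 * L)) ≤ κ * (log (L + t) - ℓ) := by
    have := div_le_log_add_sub_log hL ht htL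
    gcongr
    linarith
  calc κ ^ 2 * log (1 + L) * t / (2 * L) = κ * log (1 + L) * (κ * (t / (2 * L))) := by ring
    _ ≤ logProduct p κ ℓ (L + t) :=
      mul_le_mul hP hQ (by positivity) (add_mul_log_one_add_pos hp hκ (by linarith)).le

theorem logProduct_eq_existsUnique_abs_sub_le (hp : 0 ≤ p) (hκ : 0 < κ) {L δ t e : ℝ} (hL : 0 < L)
    (hδ : 0 ≤ δ) (hLδ : L * δ ≤ t) (htL : t ≤ 2 * L) (he : 0 < e)
    (het : e ≤ κ ^ 2 * log (1 + L) * t / (2 * L)) :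
    (∃! x, 0 < x ∧ logProduct p κ (log L - δ) x = e) ∧
      ∀ x, 0 < x → logProduct p κ (log L - δ) x = e → exp (log L - δ) < x ∧ |x - L| ≤ t := by
  have ht : 0 ≤ t := (mul_nonneg hL.le hδ).trans hLδ
  have hexp : exp (log L - δ) = L * exp (-δ) := by rw [sub_eq_add_neg, exp_add, exp_log hL]
  have hℓL : exp (log L - δ) ≤ L + t := by
    rw [hexp]
    nlinarith [exp_le_one_iff.2 (neg_nonpos.2 hδ)]
  have hℓ : L - t ≤ exp (log L - δ) := by
    rw [hexp]
    nlinarith [add_one_le_exp (-δ)]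
  have hmax : e ≤ logProduct p κ (log L - δ) (L + t) :=
    het.trans (le_logProduct_add hp hκ hL ht htL (by linarith))
  refine ⟨existsUnique_logProduct_eq hp hκ he hℓL hmax, fun x hx hfx => ?_⟩
  have hlow := exp_lt_of_logProduct_pos hp hκ hx (hfx ▸ he)
  have hup : x ≤ L + t :=
    ((strictMonoOn_logProduct hp hκ).le_iff_le hlow.le hℓL).1 (hfx ▸ hmax)
  exact ⟨hlow, abs_le.2 ⟨by linarith, by linarith⟩⟩

end LogProduct

lemma eq_div_iff_mul_eq_of_ne_zero {G₀ : Type*} [GroupWithZero G₀] {P Q e : G₀} (hP : P ≠ 0)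
    (he : e ≠ 0) : P = e / Q ↔ P * Q = e := by
  rcases eq_or_ne Q 0 with rfl | hQ
  · simp [hP, he.symm]
  · exact eq_div_iff hQ

lemma eigenvalue_equation_iff_logProduct {a θ₀ A K e x : ℝ} (hK : 0 < K) (hp : 0 ≤ θ₀ - K / a)
    (he : 0 < e) :
    (0 < x ∧ θ₀ + K * (log (1 + x) / (4 * π) - 1 / a) =
        e / (A + K * (log x / (4 * π) - 1 / a))) ↔
      (0 < x ∧ logProduct (θ₀ - K / a) (K / (4 * π)) (4 * π * (1 / a - A / K)) x = e) := by
  refine and_congr_right fun hx => ?_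
  have hP : θ₀ + K * (log (1 + x) / (4 * π) - 1 / a) = θ₀ - K / a + K / (4 * π) * log (1 + x) := by
    ring
  have hQ : A + K * (log x / (4 * π) - 1 / a) =
      K / (4 * π) * (log x - 4 * π * (1 / a - A / K)) := by
    field_simp
    ring
  rw [hP, hQ]
  exact eq_div_iff_mul_eq_of_ne_zero (add_mul_log_one_add_pos hp (by positivity) hx).ne' he.ne'

theorem eigenvalue_equation_existsUnique_near {a θ₀ A e L t : ℝ} (hθ : 0 < θ₀) (ha : 0 < a) (hA : A ≤ a)
    (he : 0 < e) (hK : θ₀ * a / 2 ≤ θ₀ * A - e) (hL : L = exp (4 * π * (1 / a - 1 / θ₀)))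
    (hLt : 8 * π * L * e / (θ₀ ^ 2 * a) ≤ t) (htL : t ≤ 2 * L)
    (het : e ≤ (θ₀ * a / (8 * π)) ^ 2 * log (1 + L) * t / (2 * L)) :
    (∃! x, 0 < x ∧ θ₀ + (θ₀ * A - e) * (log (1 + x) / (4 * π) - 1 / a) =
        e / (A + (θ₀ * A - e) * (log x / (4 * π) - 1 / a))) ∧
      ∀ x, 0 < x → θ₀ + (θ₀ * A - e) * (log (1 + x) / (4 * π) - 1 / a) =
          e / (A + (θ₀ * A - e) * (log x / (4 * π) - 1 / a)) →
        exp (4 * π * ((θ₀ / a - 1) * A - e / a) / (θ₀ * A - e)) < x ∧ |x - L| ≤ t := by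
  set K := θ₀ * A - e
  have hK0 : 0 < K := lt_of_lt_of_le (by positivity) hK
  have hp : 0 ≤ θ₀ - K / a := by
    rw [sub_nonneg, div_le_iff₀ ha]
    nlinarith
  have hLpos : 0 < L := hL ▸ exp_pos _
  have hℓ : 4 * π * ((θ₀ / a - 1) * A - e / a) / K = log L - 4 * π * e / (θ₀ * K) := by
    rw [hL, log_exp]
    field_simp
    ring
  have hℓ' : 4 * π * (1 / a - A / K) = log L - 4 * π * e / (θ₀ * K) := by
    rw [← hℓ]
    field_simp
    ring
  have hLδ : L * (4 * π * e / (θ₀ * K)) ≤ t := by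
    calc L * (4 * π * e / (θ₀ * K)) ≤ L * (4 * π * e / (θ₀ * (θ₀ * a / 2))) := by gcongr
      _ = 8 * π * L * e / (θ₀ ^ 2 * a) := by field_simp; ring
      _ ≤ t := hLt
  have het' : e ≤ (K / (4 * π)) ^ 2 * log (1 + L) * t / (2 * L) := by
    have : 0 ≤ t := le_trans (by positivity) hLt
    have := log_pos (by linarith : 1 < 1 + L)
    refine het.trans ?_
    rw [show θ₀ * a / (8 * π) = θ₀ * a / 2 / (4 * π) by ring]
    gcongr
  obtain ⟨hex, hsol⟩ := logProduct_eq_existsUnique_abs_sub_le hp (by positivity) hLpos (by positivity)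
    hLδ htL he het'
  rw [← hℓ'] at hex hsol
  refine ⟨(existsUnique_congr fun x => eigenvalue_equation_iff_logProduct hK0 hp he).2 hex,
    fun x hx hEq => ?_⟩
  rw [hℓ, ← hℓ']
  exact hsol x hx ((eigenvalue_equation_iff_logProduct hK0 hp he).1 ⟨hx, hEq⟩).2

lemma eulerMascheroniConstant_lt_log_two : eulerMascheroniConstant < log 2 :=
  eulerMascheroniConstant_lt_two_thirds.trans (by linarith [log_two_gt_d9])

/-- d = 2, c < 0, θ₀ > 0: the negative-eigenvalue equation
`θ₀ + (θ₀(a+cε) − ε²)(ln(1+λ)/(4π) − 1/a)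
    = ε²/(a + cε + (θ₀(a+cε) − ε²)(ln λ/(4π) − 1/a))` (λ > 0)
has for small ε exactly one solution; it lies in `(λ_{a,ε}, ∞)` and is within
`Cε` of `e^{4π(1/a − 1/θ₀)}`, and there are no solutions in `(0, λ_{a,ε})`. -/
theorem isolated_eigenvalue_equation_d2 (a c θ₀ : ℝ)
    (ha : a = 2 * Real.pi / (Real.log 2 - Real.eulerMascheroniConstant))
    (hc : c < 0) (hθ : 0 < θ₀) :
    ∃ C > (0 : ℝ), ∃ ε₀ > (0 : ℝ), ∀ ε : ℝ, 0 < ε → ε < ε₀ →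
      (∃! lam : ℝ, 0 < lam ∧
        θ₀ + (θ₀ * (a + c * ε) - ε ^ 2) * (Real.log (1 + lam) / (4 * Real.pi) - 1 / a) =
          ε ^ 2 / (a + c * ε +
            (θ₀ * (a + c * ε) - ε ^ 2) * (Real.log lam / (4 * Real.pi) - 1 / a))) ∧
      (∀ lam : ℝ, 0 < lam →
        θ₀ + (θ₀ * (a + c * ε) - ε ^ 2) * (Real.log (1 + lam) / (4 * Real.pi) - 1 / a) =
          ε ^ 2 / (a + c * ε +
            (θ₀ * (a + c * ε) - ε ^ 2) * (Real.log lam / (4 * Real.pi) - 1 / a)) →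
        Real.exp (4 * Real.pi * ((θ₀ / a - 1) * (a - |c| * ε) - ε ^ 2 / a) /
            (θ₀ * (a - |c| * ε) - ε ^ 2)) < lam ∧
        |lam - Real.exp (4 * Real.pi * (1 / a - 1 / θ₀))| ≤ C * ε) := by
  have ha0 : 0 < a := ha ▸ div_pos two_pi_pos (sub_pos.2 eulerMascheroniConstant_lt_log_two)
  set L := exp (4 * π * (1 / a - 1 / θ₀)) with hL
  have hLpos : 0 < L := exp_pos _
  have hlog : 0 < log (1 + L) := log_pos (by linarith)
  refine ⟨8 * π * L / (θ₀ ^ 2 * a), by positivity,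
    min (min 1 (θ₀ * a / (2 * (θ₀ * |c| + 1))))
      (min (θ₀ ^ 2 * a / (4 * π)) (a * log (1 + L) / (16 * π))), by positivity,
    fun ε hε hε₀ => ?_⟩
  simp only [lt_min_iff] at hε₀
  obtain ⟨⟨hε1, hεc⟩, hεt, hεe⟩ := hε₀
  rw [abs_of_neg hc] at hεc ⊢
  rw [neg_mul, sub_neg_eq_add]
  refine eigenvalue_equation_existsUnique_near hθ ha0 ?_ (by positivity) ?_ hL ?_ ?_ ?_
  · nlinarith
  · rw [lt_div_iff₀ (by nlinarith)] at hεc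
    nlinarith
  · rw [div_mul_eq_mul_div, div_le_div_iff_of_pos_right (by positivity)]
    gcongr
    nlinarith
  · rw [lt_div_iff₀ (by positivity)] at hεt
    rw [div_mul_eq_mul_div, div_le_iff₀ (by positivity)]
    nlinarith
  · rw [lt_div_iff₀ (by positivity)] at hεe
    field_simp
    linarith
end

section
/- Let c < 0. Then there exists ε₀ > 0 such that for all 0 < ε < ε₀ the equation 2√λ = ε²/(2(√(λ+1) − 1) + |c|ε) has exactly one solution λ_ε in (0, ∞), and this solution satisfies 0 < λ_ε < ε²/(4|c|²). Consequently, −ε²/(4|c|²) < −λ_ε < 0. -/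
/-- d = 1, θ₀ = 0, c < 0: for small ε the equation
`2√λ = ε²/(2(√(λ+1) − 1) + |c|ε)` has exactly one solution `λ_ε > 0`, and
`0 < λ_ε < ε²/(4|c|²)`; hence `−ε²/(4|c|²) < −λ_ε < 0`. -/
theorem isolated_eigenvalue_d1_theta0_zero (c : ℝ) (hc : c < 0) :
    ∃ ε₀ > (0 : ℝ), ∀ ε : ℝ, 0 < ε → ε < ε₀ →
      (∃! lam : ℝ, 0 < lam ∧
        2 * Real.sqrt lam = ε ^ 2 / (2 * (Real.sqrt (lam + 1) - 1) + |c| * ε)) ∧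
      (∀ lam : ℝ, 0 < lam →
        2 * Real.sqrt lam = ε ^ 2 / (2 * (Real.sqrt (lam + 1) - 1) + |c| * ε) →
        lam < ε ^ 2 / (4 * |c| ^ 2) ∧
        -(ε ^ 2 / (4 * |c| ^ 2)) < -lam ∧ -lam < 0) := by
  refine ⟨1, one_pos, fun ε hε _ => ?_⟩
  have hk : 0 < |c| := abs_pos.mpr hc.ne
  set k := |c| with hkdef
  set g : ℝ → ℝ := fun l => 2 * Real.sqrt l * (2 * (Real.sqrt (l + 1) - 1) + k * ε)
    with hg
  have hD : ∀ l : ℝ, 0 ≤ l → 0 < 2 * (Real.sqrt (l + 1) - 1) + k * ε := by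
    intro l hl
    have h1 : (1:ℝ) ≤ Real.sqrt (l + 1) := by
      nlinarith [Real.sq_sqrt (show (0:ℝ) ≤ l + 1 by linarith), Real.sqrt_nonneg (l+1)]
    nlinarith [mul_pos hk hε]
  have hequiv : ∀ l : ℝ, 0 ≤ l →
      (2 * Real.sqrt l = ε ^ 2 / (2 * (Real.sqrt (l + 1) - 1) + k * ε) ↔ g l = ε ^ 2) := by
    intro l hl
    rw [eq_div_iff (hD l hl).ne', hg]
  -- strict monotonicity of g on [0,∞)
  have hmono : ∀ a b : ℝ, 0 ≤ a → a < b → g a < g b := by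
    intro a b ha hab
    have hb : 0 ≤ b := le_of_lt (lt_of_le_of_lt ha hab)
    have hsa : Real.sqrt a < Real.sqrt b := Real.sqrt_lt_sqrt ha hab
    have hDab : 2 * (Real.sqrt (a+1) - 1) + k * ε ≤ 2 * (Real.sqrt (b+1) - 1) + k * ε := by
      have := Real.sqrt_le_sqrt (show a + 1 ≤ b + 1 by linarith)
      linarith
    calc g a ≤ 2 * Real.sqrt a * (2 * (Real.sqrt (b+1) - 1) + k * ε) :=
          mul_le_mul_of_nonneg_left hDab (by positivity)
      _ < 2 * Real.sqrt b * (2 * (Real.sqrt (b+1) - 1) + k * ε) :=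
          mul_lt_mul_of_pos_right (by linarith) (hD b hb)
      _ = g b := rfl
  -- the upper bound point
  set L : ℝ := ε ^ 2 / (4 * k ^ 2) with hL
  have hLpos : 0 < L := by positivity
  have hsqrtL : Real.sqrt L = ε / (2 * k) := by
    rw [hL, show ε ^ 2 / (4 * k ^ 2) = (ε / (2 * k)) ^ 2 by ring]
    exact Real.sqrt_sq (by positivity)
  have hgL : ε ^ 2 < g L := by
    have h1 : (1:ℝ) < Real.sqrt (L + 1) := by
      nlinarith [Real.sq_sqrt (show (0:ℝ) ≤ L + 1 by linarith), Real.sqrt_nonneg (L+1)]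
    have : g L = 2 * (ε / (2 * k)) * (2 * (Real.sqrt (L + 1) - 1) + k * ε) := by
      rw [hg]; simp only [hsqrtL]
    rw [this]
    have hεk : 2 * (ε / (2 * k)) * (k * ε) = ε ^ 2 := by
      field_simp
    nlinarith [mul_pos hε hk, div_pos hε (by positivity : (0:ℝ) < 2 * k)]
  have hg0 : g 0 = 0 := by simp [hg]
  -- existence via IVT
  have hcont : Continuous g := by
    rw [hg]; fun_prop
  have hIVT : ε ^ 2 ∈ g '' Set.Ioo 0 L := by
    apply intermediate_value_Ioo hLpos.le hcont.continuousOn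
    rw [hg0]
    exact ⟨by positivity, hgL⟩
  obtain ⟨lam, ⟨hlam0, hlamL⟩, hglam⟩ := hIVT
  constructor
  · refine ⟨lam, ⟨hlam0, (hequiv lam hlam0.le).mpr hglam⟩, ?_⟩
    rintro y ⟨hy0, hy⟩
    have hgy : g y = ε ^ 2 := (hequiv y hy0.le).mp hy
    rcases lt_trichotomy y lam with h | h | h
    · exact absurd (hgy.trans hglam.symm) (hmono y lam hy0.le h).ne
    · exact h
    · exact absurd (hglam.trans hgy.symm) (hmono lam y hlam0.le h).ne
  · intro l hl0 hl
    have hgl : g l = ε ^ 2 := (hequiv l hl0.le).mp hl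
    have hlL : l < L := by
      by_contra h
      push_neg at h
      rcases eq_or_lt_of_le h with h' | h'
      · rw [h'] at hgL; linarith
      · have := hmono L l hLpos.le h'
        linarith [hgl, hgL]
    exact ⟨hlL, by linarith, by linarith⟩
end

section
/- Let c < 0. Consider the equation 1 + (θ₀/(4π))√λ = [(1 + (θ₀/(4π))√λ)(1 − cε/(4π)) + (ε²/(4π)²)√λ]·√(1+λ) for λ > 0. Then there exist C > 0 and ε₀ > 0 such that for all 0 < ε < ε₀: if θ₀ ≥ 0 the equation has no solution λ > 0; if θ₀ < 0 the equation has exactly one solution λ_ε > 0, and |λ_ε − (4π/θ₀)²| ≤ Cε. In particular, for c < 0 and ε small there are no solutions of the equation in a fixed neighborhood of λ = 0. -/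
/-!
Write `t = √λ`, `a = θ₀/(4π)`, `m = 1 - cε/(4π) ≥ 1` and `q = ε²/(4π)² > 0`. The equation becomes
`(1 + a t)(m √(1+t²) - 1) + q t √(1+t²) = 0`. Wherever `1 + a t ≥ 0` (every `t` if `θ₀ ≥ 0`, and
`t ≤ τ := -1/a` otherwise) both summands are positive, so there is no root.

For `t > τ` divide by `t √(1+t²)`: the equation reads `(1/t - 1/τ)(m - 1/√(1+t²)) = -q`, and the
left side is a negative strictly decreasing factor times a positive nondecreasing one, hence strictly
decreasing. Since `m - 1/√(1+t²) ≥ gap τ := 1 - 1/√(1+τ²)`, it is at most `-gap τ/(2τ)` at `2τ`,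
which gives a unique root in `(τ, 2τ)` once `q` is small; the same bound `(1/τ - 1/t) gap τ ≤ q`
puts that root within `O(q) = O(ε²)` of `τ`.
-/

open Real Set

namespace PointInteraction

/-- With `t = √λ` the eigenvalue equation is `resid a m q t = 0`. -/
noncomputable def resid (a m q t : ℝ) : ℝ :=
  ((1 + a * t) * m + q * t) * √(1 + t ^ 2) - (1 + a * t)

noncomputable def reducedResid (a m t : ℝ) : ℝ :=
  (t⁻¹ + a) * (m - (√(1 + t ^ 2))⁻¹)

noncomputable def gap (τ : ℝ) : ℝ :=
  1 - (√(1 + τ ^ 2))⁻¹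

variable {a m q t τ lam : ℝ}

lemma one_lt_sqrt_one_add_sq (ht : 0 < t) : 1 < √(1 + t ^ 2) :=
  (lt_sqrt zero_le_one).2 (by nlinarith)

lemma sqrt_one_add_sq_le_sqrt_one_add_sq (hτ : 0 ≤ τ) (ht : τ ≤ t) :
    √(1 + τ ^ 2) ≤ √(1 + t ^ 2) :=
  sqrt_le_sqrt (by nlinarith)

lemma gap_pos (hτ : 0 < τ) : 0 < gap τ :=
  sub_pos.2 (inv_lt_one_of_one_lt₀ (one_lt_sqrt_one_add_sq hτ))

lemma gap_le (hm : 1 ≤ m) (hτ : 0 < τ) (ht : τ ≤ t) : gap τ ≤ m - (√(1 + t ^ 2))⁻¹ := by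
  have : (√(1 + t ^ 2))⁻¹ ≤ (√(1 + τ ^ 2))⁻¹ :=
    inv_anti₀ (sqrt_pos.2 (by positivity)) (sqrt_one_add_sq_le_sqrt_one_add_sq hτ.le ht)
  unfold gap
  linarith

lemma resid_eq_mul (ht : t ≠ 0) :
    resid a m q t = t * √(1 + t ^ 2) * (reducedResid a m t + q) := by
  have hs : √(1 + t ^ 2) ≠ 0 := (sqrt_pos.2 (by positivity)).ne'
  unfold resid reducedResid
  field_simp
  ring

lemma resid_pos (hm : 1 ≤ m) (hq : 0 < q) (ht : 0 < t) (hA : 0 ≤ 1 + a * t) :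
    0 < resid a m q t := by
  have hs := one_lt_sqrt_one_add_sq ht
  have hfirst : 0 ≤ (1 + a * t) * (m * √(1 + t ^ 2) - 1) := mul_nonneg hA (by nlinarith)
  have hsecond : 0 < q * t * √(1 + t ^ 2) := by positivity
  have : resid a m q t = (1 + a * t) * (m * √(1 + t ^ 2) - 1) + q * t * √(1 + t ^ 2) := by
    unfold resid; ring
  linarith

lemma reducedResid_eq_neg_of_resid_eq_zero (ht : 0 < t) (h : resid a m q t = 0) :
    reducedResid a m t = -q := by
  rw [resid_eq_mul ht.ne'] at h
  have hts : t * √(1 + t ^ 2) ≠ 0 := (mul_pos ht (sqrt_pos.2 (by positivity))).ne'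
  linarith [(mul_eq_zero.1 h).resolve_left hts]

lemma reducedResid_strictAntiOn (hτ : 0 < τ) (hm : 1 ≤ m) :
    StrictAntiOn (reducedResid (-τ⁻¹) m) (Ioi τ) := by
  intro t₁ (h₁ : τ < t₁) t₂ (h₂ : τ < t₂) h₁₂
  have hu : t₂⁻¹ - τ⁻¹ < t₁⁻¹ - τ⁻¹ := sub_lt_sub_right (inv_strictAnti₀ (hτ.trans h₁) h₁₂) _
  have hu₂ : t₂⁻¹ - τ⁻¹ < 0 := sub_neg.2 (inv_strictAnti₀ hτ h₂)
  have hv₁ : 0 < m - (√(1 + t₁ ^ 2))⁻¹ := (gap_pos hτ).trans_le (gap_le hm hτ h₁.le)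
  have hv : m - (√(1 + t₁ ^ 2))⁻¹ ≤ m - (√(1 + t₂ ^ 2))⁻¹ :=
    sub_le_sub_left (inv_anti₀ (sqrt_pos.2 (by positivity))
      (sqrt_one_add_sq_le_sqrt_one_add_sq (hτ.trans h₁).le h₁₂.le)) m
  simp only [reducedResid, ← sub_eq_add_neg]
  calc (t₂⁻¹ - τ⁻¹) * (m - (√(1 + t₂ ^ 2))⁻¹)
      ≤ (t₂⁻¹ - τ⁻¹) * (m - (√(1 + t₁ ^ 2))⁻¹) := mul_le_mul_of_nonpos_left hv hu₂.le
    _ < (t₁⁻¹ - τ⁻¹) * (m - (√(1 + t₁ ^ 2))⁻¹) := mul_lt_mul_of_pos_right hu hv₁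

lemma reducedResid_le (hτ : 0 < τ) (hm : 1 ≤ m) (ht : τ ≤ t) :
    reducedResid (-τ⁻¹) m t ≤ (t⁻¹ - τ⁻¹) * gap τ := by
  rw [reducedResid, ← sub_eq_add_neg]
  exact mul_le_mul_of_nonpos_left (gap_le hm hτ ht) (sub_nonpos.2 (inv_anti₀ hτ ht))

lemma lt_of_resid_eq_zero (hτ : 0 < τ) (hm : 1 ≤ m) (hq : 0 < q) (ht : 0 < t)
    (h : resid (-τ⁻¹) m q t = 0) : τ < t := by
  by_contra! hle
  have hA : 0 ≤ 1 + -τ⁻¹ * t := by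
    have : τ⁻¹ * t ≤ 1 := by rw [inv_mul_le_iff₀ hτ]; linarith
    linarith
  exact (resid_pos hm hq ht hA).ne' h

lemma reducedResid_two_mul_lt (hτ : 0 < τ) (hm : 1 ≤ m) (hsmall : 2 * τ * q < gap τ) :
    reducedResid (-τ⁻¹) m (2 * τ) < -q := by
  calc reducedResid (-τ⁻¹) m (2 * τ) ≤ ((2 * τ)⁻¹ - τ⁻¹) * gap τ :=
        reducedResid_le hτ hm (by linarith)
    _ = -(gap τ / (2 * τ)) := by field_simp; ring
    _ < -q := by rw [neg_lt_neg_iff, lt_div_iff₀ (by positivity)]; linarith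

lemma lt_two_mul_of_resid_eq_zero (hτ : 0 < τ) (hm : 1 ≤ m) (hq : 0 < q)
    (hsmall : 2 * τ * q < gap τ) (ht : 0 < t) (h : resid (-τ⁻¹) m q t = 0) : t < 2 * τ := by
  have hτt := lt_of_resid_eq_zero hτ hm hq ht h
  refine (StrictAntiOn.lt_iff_gt (reducedResid_strictAntiOn hτ hm)
    (mem_Ioi.2 (by linarith)) (mem_Ioi.2 hτt)).1 ?_
  rw [reducedResid_eq_neg_of_resid_eq_zero ht h]
  exact reducedResid_two_mul_lt hτ hm hsmall

lemma existsUnique_resid_eq_zero (hτ : 0 < τ) (hm : 1 ≤ m) (hq : 0 < q)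
    (hsmall : 2 * τ * q < gap τ) : ∃! t, 0 < t ∧ resid (-τ⁻¹) m q t = 0 := by
  have hcont : Continuous (resid (-τ⁻¹) m q) := by unfold resid; fun_prop
  have hleft : 0 < resid (-τ⁻¹) m q τ := resid_pos hm hq hτ (by simp [hτ.ne'])
  have hright : resid (-τ⁻¹) m q (2 * τ) < 0 := by
    rw [resid_eq_mul (by positivity)]
    exact mul_neg_of_pos_of_neg (by positivity)
      (by linarith [reducedResid_two_mul_lt hτ hm hsmall])
  obtain ⟨t, ⟨hτt, -⟩, ht⟩ :=
    intermediate_value_Ioo' (by linarith : τ ≤ 2 * τ) hcont.continuousOn ⟨hright, hleft⟩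
  refine ⟨t, ⟨hτ.trans hτt, ht⟩, fun t' ⟨ht'pos, ht'⟩ => ?_⟩
  refine (reducedResid_strictAntiOn hτ hm).injOn
    (mem_Ioi.2 (lt_of_resid_eq_zero hτ hm hq ht'pos ht')) (mem_Ioi.2 hτt) ?_
  rw [reducedResid_eq_neg_of_resid_eq_zero ht'pos ht',
    reducedResid_eq_neg_of_resid_eq_zero (hτ.trans hτt) ht]

lemma abs_sq_sub_sq_le_of_resid_eq_zero (hτ : 0 < τ) (hm : 1 ≤ m) (hq : 0 < q)
    (hsmall : 2 * τ * q < gap τ) (ht : 0 < t) (h : resid (-τ⁻¹) m q t = 0) :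
    |t ^ 2 - τ ^ 2| ≤ 6 * τ ^ 3 / gap τ * q := by
  have hτt := lt_of_resid_eq_zero hτ hm hq ht h
  have ht2τ := lt_two_mul_of_resid_eq_zero hτ hm hq hsmall ht h
  have hgap := gap_pos hτ
  have hkey : (τ⁻¹ - t⁻¹) * gap τ ≤ q := by
    have := reducedResid_le hτ hm hτt.le
    rw [reducedResid_eq_neg_of_resid_eq_zero ht h] at this
    linarith
  have hdist : (t - τ) * gap τ ≤ 2 * τ ^ 2 * q :=
    calc (t - τ) * gap τ = (τ⁻¹ - t⁻¹) * gap τ * (t * τ) := by field_simp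
      _ ≤ q * (t * τ) := mul_le_mul_of_nonneg_right hkey (by positivity)
      _ ≤ q * (2 * τ * τ) := by gcongr
      _ = 2 * τ ^ 2 * q := by ring
  rw [abs_of_pos (by nlinarith), div_mul_eq_mul_div, le_div_iff₀ hgap]
  calc (t ^ 2 - τ ^ 2) * gap τ = (t + τ) * ((t - τ) * gap τ) := by ring
    _ ≤ 3 * τ * (2 * τ ^ 2 * q) :=
        mul_le_mul (by linarith) hdist (mul_nonneg (by linarith) hgap.le) (by positivity)
    _ = 6 * τ ^ 3 * q := by ring

lemma equation_iff_resid_eq_zero (hlam : 0 ≤ lam) :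
    1 + a * √lam = ((1 + a * √lam) * m + q * √lam) * √(1 + lam) ↔
      resid a m q √lam = 0 := by
  rw [resid, sq_sqrt hlam, sub_eq_zero, eq_comm]

lemma equation_ne_of_nonneg (hm : 1 ≤ m) (hq : 0 < q) (ha : 0 ≤ a) (hlam : 0 < lam) :
    1 + a * √lam ≠ ((1 + a * √lam) * m + q * √lam) * √(1 + lam) := by
  rw [Ne, equation_iff_resid_eq_zero hlam.le]
  exact (resid_pos hm hq (sqrt_pos.2 hlam) (by positivity)).ne'

lemma existsUnique_equation (h : ∃! t, 0 < t ∧ resid a m q t = 0) :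
    ∃! lam, 0 < lam ∧ 1 + a * √lam = ((1 + a * √lam) * m + q * √lam) * √(1 + lam) := by
  obtain ⟨t, ⟨ht, hroot⟩, huniq⟩ := h
  refine ⟨t ^ 2, ⟨by positivity, ?_⟩, fun lam ⟨hlam, heq⟩ => ?_⟩
  · rwa [equation_iff_resid_eq_zero (sq_nonneg t), sqrt_sq ht.le]
  · rw [equation_iff_resid_eq_zero hlam.le] at heq
    rw [← huniq _ ⟨sqrt_pos.2 hlam, heq⟩, sq_sqrt hlam.le]

end PointInteraction

open PointInteraction

/-- d = 3, c < 0: for small ε the negative-eigenvalue equation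
`1 + (θ₀/(4π))√λ = [(1 + (θ₀/(4π))√λ)(1 − cε/(4π)) + (ε²/(4π)²)√λ]·√(1+λ)`
(λ > 0) has no solution if `θ₀ ≥ 0`, and exactly one solution if `θ₀ < 0`,
lying within `Cε` of `(4π/θ₀)²`; in particular there is a fixed neighborhood
`(0, δ)` of `0` containing no solutions. -/
theorem isolated_eigenvalue_equation_d3 (c θ₀ : ℝ) (hc : c < 0) :
    ∃ C > (0 : ℝ), ∃ δ > (0 : ℝ), ∃ ε₀ > (0 : ℝ), ∀ ε : ℝ, 0 < ε → ε < ε₀ →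
      ((0 ≤ θ₀ → ∀ lam : ℝ, 0 < lam →
        1 + θ₀ / (4 * Real.pi) * Real.sqrt lam ≠
          ((1 + θ₀ / (4 * Real.pi) * Real.sqrt lam) * (1 - c * ε / (4 * Real.pi)) +
            ε ^ 2 / (4 * Real.pi) ^ 2 * Real.sqrt lam) * Real.sqrt (1 + lam)) ∧
      (θ₀ < 0 →
        (∃! lam : ℝ, 0 < lam ∧
          1 + θ₀ / (4 * Real.pi) * Real.sqrt lam =
            ((1 + θ₀ / (4 * Real.pi) * Real.sqrt lam) * (1 - c * ε / (4 * Real.pi)) +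
              ε ^ 2 / (4 * Real.pi) ^ 2 * Real.sqrt lam) * Real.sqrt (1 + lam)) ∧
        (∀ lam : ℝ, 0 < lam →
          1 + θ₀ / (4 * Real.pi) * Real.sqrt lam =
            ((1 + θ₀ / (4 * Real.pi) * Real.sqrt lam) * (1 - c * ε / (4 * Real.pi)) +
              ε ^ 2 / (4 * Real.pi) ^ 2 * Real.sqrt lam) * Real.sqrt (1 + lam) →
          |lam - (4 * Real.pi / θ₀) ^ 2| ≤ C * ε)) ∧
      (∀ lam : ℝ, 0 < lam → lam < δ →
        1 + θ₀ / (4 * Real.pi) * Real.sqrt lam ≠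
          ((1 + θ₀ / (4 * Real.pi) * Real.sqrt lam) * (1 - c * ε / (4 * Real.pi)) +
            ε ^ 2 / (4 * Real.pi) ^ 2 * Real.sqrt lam) * Real.sqrt (1 + lam))) := by
  have hπ : 0 < 4 * π := by positivity
  have hm : ∀ ε, 0 < ε → 1 ≤ 1 - c * ε / (4 * π) := fun ε hε => by
    have : c * ε / (4 * π) < 0 := div_neg_of_neg_of_pos (mul_neg_of_neg_of_pos hc hε) hπ
    linarith
  have hq : ∀ ε, 0 < ε → 0 < ε ^ 2 / (4 * π) ^ 2 := fun ε hε => by positivity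
  rcases le_or_gt 0 θ₀ with hθ | hθ
  · have hne := fun ε hε lam (hlam : 0 < lam) =>
      equation_ne_of_nonneg (hm ε hε) (hq ε hε) (div_nonneg hθ hπ.le) hlam
    exact ⟨1, one_pos, 1, one_pos, 1, one_pos, fun ε hε _ =>
      ⟨fun _ => hne ε hε, fun h => absurd h hθ.not_gt, fun lam hlam _ => hne ε hε lam hlam⟩⟩
  obtain ⟨τ, hτ_def⟩ : ∃ τ, τ = -(4 * π / θ₀) := ⟨_, rfl⟩
  have hτ : 0 < τ := hτ_def ▸ neg_pos.2 (div_neg_of_pos_of_neg hπ hθ)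
  have hgap := gap_pos hτ
  rw [show θ₀ / (4 * π) = -τ⁻¹ by rw [hτ_def, inv_neg, neg_neg, inv_div],
    show (4 * π / θ₀) ^ 2 = τ ^ 2 by rw [hτ_def, neg_sq]]
  refine ⟨6 * τ ^ 3 / gap τ, by positivity, τ ^ 2, by positivity, min 1 (gap τ / (2 * τ)),
    by positivity, fun ε hε hε₀ => ?_⟩
  have hqε : ε ^ 2 / (4 * π) ^ 2 ≤ ε :=
    (div_le_self (sq_nonneg ε) (by nlinarith [pi_gt_three])).trans
      (by nlinarith [min_le_left 1 (gap τ / (2 * τ))])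
  have hsmall : 2 * τ * (ε ^ 2 / (4 * π) ^ 2) < gap τ := by
    have := (lt_div_iff₀ (by positivity)).1 (hε₀.trans_le (min_le_right _ _))
    nlinarith
  refine ⟨fun h => absurd h hθ.not_ge, fun _ => ⟨existsUnique_equation
    (existsUnique_resid_eq_zero hτ (hm ε hε) (hq ε hε) hsmall), fun lam hlam heq => ?_⟩,
    fun lam hlam hδ heq => ?_⟩
  · rw [equation_iff_resid_eq_zero hlam.le] at heq
    calc |lam - τ ^ 2| = |√lam ^ 2 - τ ^ 2| := by rw [sq_sqrt hlam.le]
      _ ≤ 6 * τ ^ 3 / gap τ * (ε ^ 2 / (4 * π) ^ 2) :=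
        abs_sq_sub_sq_le_of_resid_eq_zero hτ (hm ε hε) (hq ε hε) hsmall (sqrt_pos.2 hlam) heq
      _ ≤ 6 * τ ^ 3 / gap τ * ε := by gcongr
  · rw [equation_iff_resid_eq_zero hlam.le] at heq
    have := lt_of_resid_eq_zero hτ (hm ε hε) (hq ε hε) (sqrt_pos.2 hlam) heq
    exact hδ.not_gt ((lt_sqrt hτ.le).1 this)
end

section
/- Consider, for ε > 0, the equation 4(√(1+λ) − 1) = ε²/√λ for λ > 0. Then the equation has exactly one solution λ_ε > 0, and there exist C > 0 and ε₀ > 0 such that for all 0 < ε < ε₀, |λ_ε − ε^{4/3}/2^{2/3}| ≤ C·ε^{8/3}. In particular, E_ε = −λ_ε satisfies E_ε = −ε^{4/3}/2^{2/3} + O(ε^{8/3}). -/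
private lemma poly_aux_iso_ev (m lam e4 : ℝ) (hm0 : 0 < m) (hlam : 0 < lam)
    (hA4 : e4 ≤ 4 * lam^3) (hB4 : 4 * lam^3 ≤ e4 * (1 + lam/4)^2)
    (hm3 : m^3 = e4 / 4) (he4 : e4 ≤ 1) :
    m ≤ lam ∧ lam - m ≤ 2 * m^2 := by
  have he40 : 0 < e4 := by nlinarith [pow_pos hm0 3]
  have hlam1 : lam ≤ 1 := by
    by_contra h
    push_neg at h
    have h1 : (1 + lam/4)^2 ≤ 4 * lam^2 := by nlinarith
    have h2 : e4 * (1 + lam/4)^2 ≤ (1 + lam/4)^2 := by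
      nlinarith [mul_nonneg (by linarith : (0:ℝ) ≤ 1 - e4) (sq_nonneg (1 + lam/4))]
    have h3 : 4 * lam^2 < 4 * lam^3 := by nlinarith
    linarith
  have hmle : m ≤ lam := by
    have h3 : m^3 ≤ lam^3 := by rw [hm3]; linarith
    exact le_of_pow_le_pow_left₀ (by norm_num) hlam.le h3
  have hm1 : m ≤ 1 := hmle.trans hlam1
  have hstep : lam ≤ m * (1 + lam/4) := by
    have h3 : lam^3 ≤ (m * (1 + lam/4))^3 := by nlinarith [hm0.le, hlam.le]
    exact le_of_pow_le_pow_left₀ (by norm_num) (by positivity) h3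
  have h43 : lam ≤ 4*m/3 := by nlinarith
  refine ⟨hmle, ?_⟩
  nlinarith [hm0.le]

/-- d = 1, θ₀ = 0, c = 0: for every ε > 0 the equation
`4(√(1+λ) − 1) = ε²/√λ` has exactly one solution `λ_ε > 0`, and for small ε
`λ_ε = ε^{4/3}/2^{2/3} + O(ε^{8/3})`; i.e. `E_ε = −λ_ε = −ε^{4/3}/2^{2/3} + O(ε^{8/3})`. -/
theorem isolated_eigenvalue_d1_offdiagonal :
    (∀ ε : ℝ, 0 < ε →
      ∃! lam : ℝ, 0 < lam ∧
        4 * (Real.sqrt (1 + lam) - 1) = ε ^ 2 / Real.sqrt lam) ∧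
    (∃ C > (0 : ℝ), ∃ ε₀ > (0 : ℝ), ∀ ε : ℝ, 0 < ε → ε < ε₀ →
      ∀ lam : ℝ, 0 < lam →
        4 * (Real.sqrt (1 + lam) - 1) = ε ^ 2 / Real.sqrt lam →
        |lam - ε ^ ((4 : ℝ) / 3) / 2 ^ ((2 : ℝ) / 3)| ≤ C * ε ^ ((8 : ℝ) / 3) ∧
        |(-lam) - (-(ε ^ ((4 : ℝ) / 3) / 2 ^ ((2 : ℝ) / 3)))| ≤ C * ε ^ ((8 : ℝ) / 3)) := by
  constructor
  · -- existence and uniqueness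
    intro ε hε
    set g : ℝ → ℝ := fun l => 4 * (Real.sqrt (1 + l) - 1) * Real.sqrt l with hg
    have hmono : StrictMonoOn g (Set.Ici 0) := by
      intro a ha b hb hab
      simp only [Set.mem_Ici] at ha hb
      have h1 : Real.sqrt (1 + a) < Real.sqrt (1 + b) :=
        Real.sqrt_lt_sqrt (by linarith) (by linarith)
      have h2 : Real.sqrt a ≤ Real.sqrt b := Real.sqrt_le_sqrt hab.le
      have h3 : (1:ℝ) ≤ Real.sqrt (1 + a) := by
        have := Real.sqrt_le_sqrt (show (1:ℝ) ≤ 1 + a by linarith)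
        rwa [Real.sqrt_one] at this
      have h4 : 0 < Real.sqrt b := Real.sqrt_pos.mpr (lt_of_le_of_lt ha hab)
      have h5 : 0 ≤ Real.sqrt a := Real.sqrt_nonneg a
      simp only [hg]
      nlinarith
    have hcont : Continuous g := by
      apply Continuous.mul
      · exact (continuous_const.mul ((Real.continuous_sqrt.comp
          (continuous_const.add continuous_id)).sub continuous_const))
      · exact Real.continuous_sqrt
    have hg0 : g 0 = 0 := by simp [hg]
    set B : ℝ := (1 + ε^2/4)^2 with hB
    have hB0 : (0:ℝ) ≤ B := sq_nonneg _
    have hsB : Real.sqrt B = 1 + ε^2/4 := Real.sqrt_sq (by positivity)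
    have hgB : ε^2 < g B := by
      have h1 : Real.sqrt B < Real.sqrt (1 + B) :=
        Real.sqrt_lt_sqrt hB0 (by linarith)
      rw [hsB] at h1
      simp only [hg]
      rw [hsB]
      nlinarith [sq_nonneg ε, hε]
    have hIVT := intermediate_value_Icc hB0 hcont.continuousOn
    have hmem : ε^2 ∈ Set.Icc (g 0) (g B) := by
      constructor
      · rw [hg0]; positivity
      · exact hgB.le
    obtain ⟨lam, hlam_mem, hlam_eq⟩ := hIVT hmem
    have hlam_pos : 0 < lam := by
      rcases lt_or_eq_of_le hlam_mem.1 with h | h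
      · exact h
      · exfalso; rw [← h] at hlam_eq; rw [hg0] at hlam_eq
        have : (0:ℝ) < ε^2 := by positivity
        linarith
    have hs : 0 < Real.sqrt lam := Real.sqrt_pos.mpr hlam_pos
    refine ⟨lam, ⟨hlam_pos, ?_⟩, ?_⟩
    · rw [eq_div_iff hs.ne']
      exact hlam_eq
    · rintro y ⟨hy, hyeq⟩
      have hys : 0 < Real.sqrt y := Real.sqrt_pos.mpr hy
      have hgy : g y = ε^2 := by
        simp only [hg]
        rw [eq_div_iff hys.ne'] at hyeq
        exact hyeq
      exact hmono.injOn (Set.mem_Ici.mpr hy.le) (Set.mem_Ici.mpr hlam_pos.le)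
        (by rw [hgy, hlam_eq])
  · -- asymptotics
    refine ⟨1, one_pos, 1, one_pos, ?_⟩
    intro ε hε hε1 lam hlam heq
    set m : ℝ := ε ^ ((4:ℝ)/3) / 2 ^ ((2:ℝ)/3) with hm
    have hm0 : 0 < m := by
      apply div_pos (Real.rpow_pos_of_pos hε _) (Real.rpow_pos_of_pos (by norm_num) _)
    have hm3 : m^3 = ε^4 / 4 := by
      rw [hm, div_pow, ← Real.rpow_natCast (ε ^ ((4:ℝ)/3)) 3,
        ← Real.rpow_natCast ((2:ℝ) ^ ((2:ℝ)/3)) 3,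
        ← Real.rpow_mul hε.le, ← Real.rpow_mul (by norm_num : (0:ℝ) ≤ 2),
        show (4:ℝ)/3 * ((3:ℕ):ℝ) = ((4:ℕ):ℝ) by push_cast; ring,
        show (2:ℝ)/3 * ((3:ℕ):ℝ) = ((2:ℕ):ℝ) by push_cast; ring,
        Real.rpow_natCast, Real.rpow_natCast]
      norm_num
    have hm2 : m^2 = ε ^ ((8:ℝ)/3) / 2 ^ ((4:ℝ)/3) := by
      rw [hm, div_pow, ← Real.rpow_natCast (ε ^ ((4:ℝ)/3)) 2,
        ← Real.rpow_natCast ((2:ℝ) ^ ((2:ℝ)/3)) 2,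
        ← Real.rpow_mul hε.le, ← Real.rpow_mul (by norm_num : (0:ℝ) ≤ 2)]
      norm_num
    set s := Real.sqrt lam with hsdef
    set u := Real.sqrt (1 + lam) with hudef
    have hs0 : 0 < s := Real.sqrt_pos.mpr hlam
    have hs2 : s^2 = lam := Real.sq_sqrt hlam.le
    have hu2 : u^2 = 1 + lam := Real.sq_sqrt (by linarith)
    have hu1 : (1:ℝ) ≤ u := by
      have := Real.sqrt_le_sqrt (show (1:ℝ) ≤ 1 + lam by linarith)
      rwa [Real.sqrt_one] at this
    have hule : u ≤ 1 + lam/2 := by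
      rw [hudef, show (1:ℝ) + lam/2 = Real.sqrt ((1+lam/2)^2) from
        (Real.sqrt_sq (by linarith)).symm]
      exact Real.sqrt_le_sqrt (by nlinarith)
    rw [eq_div_iff hs0.ne'] at heq
    -- heq : 4 * (u - 1) * s = ε ^ 2
    have hA : ε^2 ≤ 2 * lam * s := by nlinarith [hs0.le]
    have hB : 2 * lam * s ≤ ε^2 * (1 + lam/4) := by
      have hid : ε^2 * (1 + u) = 4 * lam * s := by nlinarith
      nlinarith [sq_nonneg ε]
    have hA4 : ε^4 ≤ 4 * lam^3 := by
      have h2 := mul_self_le_mul_self (sq_nonneg ε) hA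
      nlinarith [hs2, hlam.le]
    have hB4 : 4 * lam^3 ≤ ε^4 * (1 + lam/4)^2 := by
      have h2 := mul_self_le_mul_self (by positivity : (0:ℝ) ≤ 2 * lam * s) hB
      nlinarith [hs0.le, hlam.le]
    have hε4 : ε^4 ≤ 1 := by
      have := pow_lt_one₀ hε.le hε1 (by norm_num : (4:ℕ) ≠ 0)
      linarith
    obtain ⟨hmle, hfinal⟩ := poly_aux_iso_ev m lam (ε^4) hm0 hlam hA4 hB4 hm3 hε4
    have habs : |lam - m| ≤ 2 * m^2 := by
      rw [abs_le]
      constructor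
      · linarith [sq_nonneg m]
      · exact hfinal
    have h2le : (2:ℝ) ≤ 2 ^ ((4:ℝ)/3) := by
      nth_rewrite 1 [show (2:ℝ) = 2 ^ (1:ℝ) by norm_num]
      exact Real.rpow_le_rpow_of_exponent_le (by norm_num) (by norm_num)
    have hT0 : (0:ℝ) < 2 ^ ((4:ℝ)/3) := Real.rpow_pos_of_pos (by norm_num) _
    have hE0 : (0:ℝ) ≤ ε ^ ((8:ℝ)/3) := Real.rpow_nonneg hε.le _
    have hbound : 2 * m^2 ≤ 1 * ε ^ ((8:ℝ)/3) := by
      rw [hm2, one_mul, mul_div_assoc', div_le_iff₀ hT0]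
      have h := mul_le_mul_of_nonneg_left h2le hE0
      linarith
    constructor
    · exact habs.trans hbound
    · rw [show -lam - -m = -(lam - m) by ring, abs_neg]
      exact habs.trans hbound
end

section
/- Let θ₀ < 0 and c = 0. Consider, for ε > 0, the equation 2(√(1+λ) − 1) = ε²/(2√λ + |θ₀|) for λ > 0. Then the equation has exactly one solution λ_ε > 0, and there exist C > 0 and ε₀ > 0 such that for all 0 < ε < ε₀, |λ_ε − ε²/|θ₀|| ≤ C·ε³. In particular, E_ε = −λ_ε satisfies E_ε = −ε²/|θ₀| + O(ε³). -/
set_option maxHeartbeats 1000000 in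
/-- d = 1, θ₀ < 0, c = 0: for every ε > 0 the equation
`2(√(1+λ) − 1) = ε²/(2√λ + |θ₀|)` has exactly one solution `λ_ε > 0`, and for
small ε `λ_ε = ε²/|θ₀| + O(ε³)`; i.e. `E_ε = −λ_ε = −ε²/|θ₀| + O(ε³)`. -/
theorem isolated_eigenvalue_d1_offdiagonal_theta_neg (θ₀ : ℝ) (hθ : θ₀ < 0) :
    (∀ ε : ℝ, 0 < ε →
      ∃! lam : ℝ, 0 < lam ∧
        2 * (Real.sqrt (1 + lam) - 1) = ε ^ 2 / (2 * Real.sqrt lam + |θ₀|)) ∧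
    (∃ C > (0 : ℝ), ∃ ε₀ > (0 : ℝ), ∀ ε : ℝ, 0 < ε → ε < ε₀ →
      ∀ lam : ℝ, 0 < lam →
        2 * (Real.sqrt (1 + lam) - 1) = ε ^ 2 / (2 * Real.sqrt lam + |θ₀|) →
        abs (lam - ε ^ 2 / |θ₀|) ≤ C * ε ^ 3 ∧
        abs ((-lam) - (-(ε ^ 2 / |θ₀|))) ≤ C * ε ^ 3) := by
  have ha : (0:ℝ) < |θ₀| := abs_pos.mpr (ne_of_lt hθ)
  set a := |θ₀| with ha_def
  set g : ℝ → ℝ := fun l => 2 * (Real.sqrt (1 + l) - 1) * (2 * Real.sqrt l + a)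
    with hg_def
  have hpos2 : ∀ l : ℝ, 0 < 2 * Real.sqrt l + a := by
    intro l
    have := Real.sqrt_nonneg l
    linarith
  have hiff : ∀ ε l : ℝ, 0 < l →
      (2 * (Real.sqrt (1 + l) - 1) = ε ^ 2 / (2 * Real.sqrt l + a) ↔ g l = ε ^ 2) := by
    intro ε l _
    rw [hg_def]
    simp only
    rw [eq_div_iff (ne_of_gt (hpos2 l))]
  have hmono : ∀ x y : ℝ, 0 ≤ x → x < y → g x < g y := by
    intro x y hx hxy
    have h1 : Real.sqrt (1 + x) < Real.sqrt (1 + y) :=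
      Real.sqrt_lt_sqrt (by linarith) (by linarith)
    have h1' : (1:ℝ) ≤ Real.sqrt (1 + x) := by
      nlinarith [Real.sq_sqrt (show (0:ℝ) ≤ 1 + x by linarith),
        Real.sqrt_nonneg (1 + x)]
    have h2 : Real.sqrt x ≤ Real.sqrt y := Real.sqrt_le_sqrt hxy.le
    have h3 := hpos2 y
    have h4 := hpos2 x
    simp only [hg_def]
    nlinarith
  constructor
  · intro ε hε
    set M := (1 + ε^2/(2*a))^2 - 1 with hM_def
    have hq : 0 < ε^2/(2*a) := by positivity
    have hM : 0 < M := by rw [hM_def]; nlinarith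
    have hsM : Real.sqrt (1 + M) = 1 + ε^2/(2*a) := by
      rw [show 1 + M = (1 + ε^2/(2*a))^2 by rw [hM_def]; ring]
      exact Real.sqrt_sq (by positivity)
    have hcont : ContinuousOn g (Set.Icc 0 M) := by
      apply Continuous.continuousOn
      rw [hg_def]
      fun_prop
    have hg0 : g 0 = 0 := by simp [hg_def]
    have hgM : ε^2 ≤ g M := by
      simp only [hg_def]
      rw [hsM]
      have hs : 0 ≤ Real.sqrt M := Real.sqrt_nonneg M
      have hkey : 2 * (ε^2/(2*a)) * a = ε^2 := by field_simp
      nlinarith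
    have hmem : ε^2 ∈ Set.Icc (g 0) (g M) := ⟨by rw [hg0]; positivity, hgM⟩
    obtain ⟨lam, hlam_mem, hglam⟩ := intermediate_value_Icc hM.le hcont hmem
    have hlam_pos : 0 < lam := by
      rcases lt_or_eq_of_le hlam_mem.1 with h | h
      · exact h
      · exfalso
        rw [← h, hg0] at hglam
        nlinarith
    refine ⟨lam, ⟨hlam_pos, (hiff ε lam hlam_pos).mpr hglam⟩, ?_⟩
    rintro μ ⟨hμ, heqμ⟩
    have hgμ : g μ = ε^2 := (hiff ε μ hμ).mp heqμ
    rcases lt_trichotomy μ lam with h | h | h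
    · have := hmono μ lam hμ.le h
      rw [hgμ, hglam] at this
      exact absurd this (lt_irrefl _)
    · exact h
    · have := hmono lam μ hlam_pos.le h
      rw [hgμ, hglam] at this
      exact absurd this (lt_irrefl _)
  · set K := 1/a + 1/4 with hK_def
    have hK : 0 < K := by rw [hK_def]; positivity
    refine ⟨(1/2 + 4*Real.sqrt K)/(2*a^2), by positivity, min 1 a,
      lt_min one_pos ha, ?_⟩
    intro ε hε hεlt lam hlam heq
    have hε1 : ε ≤ 1 := le_of_lt (lt_of_lt_of_le hεlt (min_le_left _ _))
    have hεa : ε < a := lt_of_lt_of_le hεlt (min_le_right _ _)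
    set s := Real.sqrt lam with hs_def
    set t := Real.sqrt (1 + lam) with ht_def
    have hs0 : 0 ≤ s := Real.sqrt_nonneg lam
    have hs2 : s^2 = lam := Real.sq_sqrt hlam.le
    have ht2 : t^2 = 1 + lam := Real.sq_sqrt (by linarith)
    have ht0 : 0 ≤ t := Real.sqrt_nonneg (1 + lam)
    have ht1 : 1 ≤ t := by nlinarith
    have heq' : 2*(t-1)*(2*s+a) = ε^2 := by
      rw [eq_div_iff (ne_of_gt (hpos2 lam))] at heq
      exact heq
    -- t - 1 ≤ ε²/(2a)
    have hta : 2*(t-1)*a ≤ ε^2 := by nlinarith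
    have ht_le : t - 1 ≤ ε^2/(2*a) := by
      rw [le_div_iff₀ (by positivity)]
      linarith
    have hεsq : ε^2 ≤ ε := by nlinarith
    have hεa2 : ε^2 ≤ a^2 := by nlinarith
    -- lam ≤ K ε²
    have ht_ub : t ≤ 1 + ε^2/(2*a) := by linarith
    have h4 : lam ≤ ε^2/a + ε^4/(4*a^2) := by
      have := mul_le_mul ht_ub ht_ub ht0 (by positivity)
      have hexp : (1 + ε^2/(2*a)) * (1 + ε^2/(2*a)) = 1 + ε^2/a + ε^4/(4*a^2) := by
        field_simp
        ring
      have htsq : t^2 = t*t := sq t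
      linarith [this, hexp, ht2, htsq]
    have h5 : ε^4/(4*a^2) ≤ ε^2/4 := by
      rw [div_le_div_iff₀ (by positivity) (by norm_num : (0:ℝ) < 4)]
      have hmm := mul_le_mul_of_nonneg_left hεa2 (sq_nonneg ε)
      calc ε^4 * 4 = 4*(ε^2*ε^2) := by ring
        _ ≤ 4*(ε^2*a^2) := by linarith
        _ = ε^2*(4*a^2) := by ring
    have hlamK : lam ≤ K*ε^2 := by
      rw [hK_def]
      have hKε : (1/a + 1/4)*ε^2 = ε^2/a + ε^2/4 := by ring
      linarith
    have hsK : s ≤ Real.sqrt K * ε := by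
      calc s ≤ Real.sqrt (K*ε^2) := by
              rw [hs_def]; exact Real.sqrt_le_sqrt hlamK
        _ = Real.sqrt K * ε := by
              rw [Real.sqrt_mul hK.le, Real.sqrt_sq hε.le]
    -- main identity
    have hid2 : lam*a - ε^2 = (t-1)*(a*(t-1)-4*s) := by
      linear_combination (-a)*ht2 + heq'
    have hid : lam - ε^2/a = (t-1)*(a*(t-1)-4*s)/a := by
      field_simp
      linear_combination hid2
    have hnum : |(t-1)*(a*(t-1)-4*s)| ≤ (t-1)*(a*(t-1)+4*s) := by
      rw [abs_mul, abs_of_nonneg (by linarith : (0:ℝ) ≤ t - 1)]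
      have h2 : |a*(t-1)-4*s| ≤ a*(t-1)+4*s := by
        rw [abs_le]
        constructor <;> nlinarith
      exact mul_le_mul_of_nonneg_left h2 (by linarith)
    have hsqK : 0 ≤ Real.sqrt K := Real.sqrt_nonneg K
    have h_as : a*(t-1) ≤ ε/2 := by nlinarith
    have hmain : |lam - ε^2/a| ≤ (1/2 + 4*Real.sqrt K)/(2*a^2) * ε^3 := by
      rw [hid, abs_div, abs_of_pos ha, div_le_iff₀ ha]
      calc |(t-1)*(a*(t-1)-4*s)| ≤ (t-1)*(a*(t-1)+4*s) := hnum
        _ ≤ (ε^2/(2*a)) * (ε/2 + 4*(Real.sqrt K * ε)) := by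
            apply mul_le_mul ht_le (by linarith) (by nlinarith) (by positivity)
        _ = (1/2 + 4*Real.sqrt K)/(2*a^2) * ε^3 * a := by
            field_simp
    refine ⟨hmain, ?_⟩
    rw [show (-lam) - (-(ε^2/a)) = -(lam - ε^2/a) by ring, abs_neg]
    exact hmain
end

section
/- Let a = 2π/(ln 2 − γ), where γ is the Euler–Mascheroni constant, let θ₀ = 0 and c = 0. Consider the equation ln(1+λ)/(4π) = 1/a + 1/(ε²·ln λ/(4π) − a − ε²/a) for λ > 0. Then there exists ε₀ > 0 such that for all 0 < ε < ε₀ the equation has exactly two solutions: one lies in (exp(4π(a/ε² + 1/a)), ∞), and the other, λ_ε, lies in (0, exp(4π/a)) and satisfies λ_ε = (2/a²)·ε²·|ln ε| + o(ε²·|ln ε|) as ε → 0. -/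
/-!
Put `p x = 1/a - log (1 + x)/(4π)` and `q x = a + ε²/a - ε² log x/(4π)`; the equation says
`p x = (q x)⁻¹`, i.e. `p x * q x = 1`. Both factors decrease, `p` vanishes at `pZero = e^{4π/a} - 1`
and `q` at the much larger `qZero = exp (4π (a/ε² + 1/a))`. So `p * q` falls from `+∞` to `0` on
`(0, pZero)`, is `≤ 0` on `[pZero, qZero]` and rises from `0` to `+∞` on `(qZero, ∞)`: it takes the
value `1` exactly once on each outer interval, for every `ε ≠ 0`.

For the small root, at `x = c ε² |log ε|` one has `log x ~ 2 log ε`, hence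
`q x = a + ε² |log ε|/(2π) + o(ε² |log ε|)` and
`(p x * q x - 1)/(ε² |log ε|) → (a/4π) (2/a² - c)`. The sign change at `c = 2/a²` together with the
monotonicity of `p * q` squeezes the root between `(2/a² ± δ) ε² |log ε|`.
-/

open Real Filter Set Topology

namespace TwoChannel

noncomputable section

def SecularEq (a ε x : ℝ) : Prop :=
  log (1 + x) / (4 * π) = 1 / a + 1 / (ε ^ 2 * log x / (4 * π) - a - ε ^ 2 / a)

def p (a x : ℝ) : ℝ := 1 / a - log (1 + x) / (4 * π)

def q (a ε x : ℝ) : ℝ := a + ε ^ 2 / a - ε ^ 2 * log x / (4 * π)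

def pZero (a : ℝ) : ℝ := exp (4 * π / a) - 1

def qZero (a ε : ℝ) : ℝ := exp (4 * π * (a / ε ^ 2 + 1 / a))

variable {a ε x c : ℝ}

theorem secularEq_iff_p_eq_inv_q : SecularEq a ε x ↔ p a x = (q a ε x)⁻¹ := by
  have hden : ε ^ 2 * log x / (4 * π) - a - ε ^ 2 / a = -q a ε x := by unfold q; ring
  rw [SecularEq, hden, p, one_div_neg_eq_neg_one_div]
  simp only [one_div]
  constructor <;> intro h <;> linarith

theorem p_strictAntiOn (a : ℝ) : StrictAntiOn (p a) (Ioi (-1)) := fun x hx y _ hxy => by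
  have hx : 0 < 1 + x := by rw [mem_Ioi] at hx; linarith
  unfold p
  gcongr

theorem q_strictAntiOn (a : ℝ) (hε : ε ≠ 0) : StrictAntiOn (q a ε) (Ioi 0) := fun x hx y _ hxy => by
  unfold q
  gcongr

theorem p_pZero (a : ℝ) : p a (pZero a) = 0 := by
  rw [p, pZero, add_sub_cancel, log_exp]
  field_simp
  ring

theorem q_qZero (a : ℝ) (hε : ε ≠ 0) : q a ε (qZero a ε) = 0 := by
  rw [q, qZero, log_exp]
  field_simp
  ring

theorem pZero_pos (ha : 0 < a) : 0 < pZero a :=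
  sub_pos.2 (one_lt_exp_iff.2 (by positivity))

theorem pZero_lt_exp (a : ℝ) : pZero a < exp (4 * π / a) := sub_one_lt _

theorem exp_le_qZero (ha : 0 ≤ a) (ε : ℝ) : exp (4 * π / a) ≤ qZero a ε := by
  refine exp_le_exp.2 ?_
  have : 0 ≤ 4 * π * (a / ε ^ 2) := by positivity
  rw [mul_add, mul_one_div]
  linarith

theorem pZero_lt_qZero (ha : 0 ≤ a) (ε : ℝ) : pZero a < qZero a ε :=
  (pZero_lt_exp a).trans_le (exp_le_qZero ha ε)

theorem neg_one_lt_pZero (a : ℝ) : -1 < pZero a := by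
  simp [pZero, exp_pos]

theorem p_pos_of_lt (hx : -1 < x) (h : x < pZero a) : 0 < p a x :=
  p_pZero a ▸ p_strictAntiOn a hx (neg_one_lt_pZero a) h

theorem p_neg_of_gt (h : pZero a < x) : p a x < 0 :=
  p_pZero a ▸ p_strictAntiOn a (neg_one_lt_pZero a) ((neg_one_lt_pZero a).trans h) h

theorem q_pos_of_lt (hε : ε ≠ 0) (hx : 0 < x) (h : x < qZero a ε) : 0 < q a ε x :=
  q_qZero a hε ▸ q_strictAntiOn a hε hx (exp_pos _) h

theorem q_neg_of_gt (hε : ε ≠ 0) (h : qZero a ε < x) : q a ε x < 0 :=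
  q_qZero a hε ▸ q_strictAntiOn a hε (exp_pos _) ((exp_pos _).trans h) h

theorem p_mul_q_strictAntiOn (ha : 0 ≤ a) (hε : ε ≠ 0) :
    StrictAntiOn (fun x => p a x * q a ε x) (Ioo 0 (pZero a)) := by
  rintro x ⟨hx0, -⟩ y ⟨hy0, hyS⟩ hxy
  have hx : -1 < x := by linarith
  exact mul_lt_mul'' (p_strictAntiOn a hx (hx.trans hxy) hxy) (q_strictAntiOn a hε hx0 hy0 hxy)
    (p_pos_of_lt (hx.trans hxy) hyS).le (q_pos_of_lt hε hy0 (hyS.trans (pZero_lt_qZero ha ε))).le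

theorem p_mul_q_strictMonoOn (ha : 0 ≤ a) (hε : ε ≠ 0) :
    StrictMonoOn (fun x => p a x * q a ε x) (Ioi (qZero a ε)) := by
  intro x (hx : qZero a ε < x) y _ hxy
  have hx0 : 0 < x := (exp_pos _).trans hx
  have hx1 : -1 < x := by linarith
  have hpx : pZero a < x := (pZero_lt_qZero ha ε).trans hx
  have hp := neg_lt_neg (p_strictAntiOn a hx1 (hx1.trans hxy) hxy)
  have hq := neg_lt_neg (q_strictAntiOn a hε hx0 (hx0.trans hxy) hxy)
  simpa only [neg_mul_neg] using mul_lt_mul'' hp hq (neg_nonneg.2 (p_neg_of_gt hpx).le)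
    (neg_nonneg.2 (q_neg_of_gt hε hx).le)

theorem continuousOn_p_mul_q : ContinuousOn (fun x => p a x * q a ε x) (Ioi 0) := by
  unfold p q
  fun_prop (disch := intro x hx; simp at hx ⊢; linarith)

theorem tendsto_p_mul_q_nhdsGT_zero (ha : 0 < a) (hε : ε ≠ 0) :
    Tendsto (fun x => p a x * q a ε x) (𝓝[>] 0) atTop := by
  have hp : Tendsto (p a) (𝓝[>] 0) (𝓝 (1 / a)) := by
    have : ContinuousAt (p a) 0 := by unfold p; fun_prop (disch := norm_num)
    simpa [p] using this.tendsto.mono_left nhdsWithin_le_nhds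
  have hq : Tendsto (q a ε) (𝓝[>] 0) atTop := by
    refine (tendsto_atTop_add_const_left _ (a + ε ^ 2 / a)
      ((tendsto_neg_atBot_atTop.comp tendsto_log_nhdsGT_zero).const_mul_atTop
        (by positivity : 0 < ε ^ 2 / (4 * π)))).congr fun x => ?_
    simp only [q, Function.comp_apply]
    ring
  exact hp.pos_mul_atTop (by positivity) hq

theorem tendsto_p_mul_q_atTop (hε : ε ≠ 0) :
    Tendsto (fun x => p a x * q a ε x) atTop atTop := by
  have hp : Tendsto (p a) atTop atBot := by
    refine (tendsto_atBot_add_const_left _ (1 / a)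
      ((tendsto_log_atTop.comp (tendsto_atTop_add_const_left _ 1 tendsto_id)).const_mul_atTop_of_neg
        (neg_lt_zero.2 (by positivity : (0 : ℝ) < 1 / (4 * π))))).congr fun x => ?_
    simp only [p, Function.comp_apply, id]
    ring
  have hq : Tendsto (q a ε) atTop atBot := by
    refine (tendsto_atBot_add_const_left _ (a + ε ^ 2 / a)
      (tendsto_log_atTop.const_mul_atTop_of_neg
        (neg_lt_zero.2 (by positivity : 0 < ε ^ 2 / (4 * π))))).congr fun x => ?_
    simp only [q]
    ring
  exact hp.atBot_mul_atBot₀ hq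

theorem exists_p_mul_q_eq_one_lt_pZero (ha : 0 < a) (hε : ε ≠ 0) :
    ∃ x, 0 < x ∧ x < pZero a ∧ p a x * q a ε x = 1 := by
  obtain ⟨x₀, hx₀, hx₀0, hx₀S⟩ := (((tendsto_p_mul_q_nhdsGT_zero ha hε).eventually_gt_atTop 1).and
    (Ioo_mem_nhdsGT (pZero_pos ha))).exists
  obtain ⟨x, ⟨hx₀x, hxS⟩, hx⟩ := intermediate_value_Ioo' hx₀S.le
    (continuousOn_p_mul_q.mono fun y hy => hx₀0.trans_le hy.1) ⟨by simp [p_pZero], hx₀⟩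
  exact ⟨x, hx₀0.trans hx₀x, hxS, hx⟩

theorem exists_p_mul_q_eq_one_gt_qZero (hε : ε ≠ 0) :
    ∃ x, qZero a ε < x ∧ p a x * q a ε x = 1 := by
  obtain ⟨x₀, hx₀, hZx₀⟩ := (((tendsto_p_mul_q_atTop (a := a) hε).eventually_gt_atTop 1).and
    (eventually_gt_atTop (qZero a ε))).exists
  obtain ⟨x, ⟨hZx, -⟩, hx⟩ := intermediate_value_Ioo hZx₀.le
    (continuousOn_p_mul_q.mono fun y hy => (exp_pos _).trans_le hy.1)
    ⟨by simp only [q_qZero a hε, mul_zero, zero_lt_one], hx₀⟩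
  exact ⟨x, hZx, hx⟩

theorem lt_pZero_or_qZero_lt_of_p_mul_q_eq_one (hε : ε ≠ 0) (hx : 0 < x)
    (h : p a x * q a ε x = 1) : x < pZero a ∨ qZero a ε < x := by
  by_contra! hmid
  have hp : p a x ≤ 0 := p_pZero a ▸ (p_strictAntiOn a).antitoneOn
    (neg_one_lt_pZero a) ((neg_one_lt_pZero a).trans_le hmid.1) hmid.1
  have hq : 0 ≤ q a ε x := q_qZero a hε ▸ (q_strictAntiOn a hε).antitoneOn hx (exp_pos _) hmid.2
  linarith [mul_nonpos_of_nonpos_of_nonneg hp hq]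

theorem secularEq_iff (ha : 0 ≤ a) (hε : ε ≠ 0) (hx : 0 < x) :
    SecularEq a ε x ↔ p a x * q a ε x = 1 := by
  rw [secularEq_iff_p_eq_inv_q]
  by_cases hq : q a ε x = 0
  · have hxZ : x = qZero a ε :=
      (q_strictAntiOn a hε).injOn hx (exp_pos _) (hq.trans (q_qZero a hε).symm)
    have hp : p a x ≠ 0 := (p_neg_of_gt (hxZ ▸ pZero_lt_qZero ha ε)).ne
    simp [hq, hp]
  · exact (mul_eq_one_iff_eq_inv₀ hq).symm

/-- Junk unless `0 < a` and `ε ≠ 0`, see `smallRoot_spec`. -/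
def smallRoot (a ε : ℝ) : ℝ :=
  Classical.epsilon fun x => 0 < x ∧ x < pZero a ∧ p a x * q a ε x = 1

def largeRoot (a ε : ℝ) : ℝ :=
  Classical.epsilon fun x => qZero a ε < x ∧ p a x * q a ε x = 1

theorem smallRoot_spec (ha : 0 < a) (hε : ε ≠ 0) :
    0 < smallRoot a ε ∧ smallRoot a ε < pZero a ∧
      p a (smallRoot a ε) * q a ε (smallRoot a ε) = 1 :=
  Classical.epsilon_spec (exists_p_mul_q_eq_one_lt_pZero ha hε)

theorem largeRoot_spec (hε : ε ≠ 0) :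
    qZero a ε < largeRoot a ε ∧ p a (largeRoot a ε) * q a ε (largeRoot a ε) = 1 :=
  Classical.epsilon_spec (exists_p_mul_q_eq_one_gt_qZero hε)

theorem secularEq_iff_eq_smallRoot_or_eq_largeRoot (ha : 0 < a) (hε : ε ≠ 0) (hx : 0 < x) :
    SecularEq a ε x ↔ x = smallRoot a ε ∨ x = largeRoot a ε := by
  obtain ⟨hS0, hS, hS1⟩ := smallRoot_spec ha hε
  obtain ⟨hL, hL1⟩ := largeRoot_spec (a := a) hε
  rw [secularEq_iff ha.le hε hx]
  constructor
  · intro h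
    refine (lt_pZero_or_qZero_lt_of_p_mul_q_eq_one hε hx h).imp (fun hxS => ?_) fun hxL => ?_
    · exact (p_mul_q_strictAntiOn ha.le hε).injOn ⟨hx, hxS⟩ ⟨hS0, hS⟩ (h.trans hS1.symm)
    · exact (p_mul_q_strictMonoOn ha.le hε).injOn hxL hL (h.trans hL1.symm)
  · rintro (rfl | rfl) <;> assumption

theorem lt_smallRoot_iff (ha : 0 < a) (hε : ε ≠ 0) (hx : 0 < x) (hxS : x < pZero a) :
    x < smallRoot a ε ↔ 1 < p a x * q a ε x := by
  obtain ⟨hS0, hS, hS1⟩ := smallRoot_spec ha hε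
  rw [← hS1]
  exact ((p_mul_q_strictAntiOn ha.le hε).lt_iff_gt ⟨hS0, hS⟩ ⟨hx, hxS⟩).symm

theorem smallRoot_lt_iff (ha : 0 < a) (hε : ε ≠ 0) (hx : 0 < x) (hxS : x < pZero a) :
    smallRoot a ε < x ↔ p a x * q a ε x < 1 := by
  obtain ⟨hS0, hS, hS1⟩ := smallRoot_spec ha hε
  rw [← hS1]
  exact ((p_mul_q_strictAntiOn ha.le hε).lt_iff_gt ⟨hx, hxS⟩ ⟨hS0, hS⟩).symm

theorem tendsto_sq_mul_neg_log : Tendsto (fun ε => ε ^ 2 * -log ε) (𝓝[>] 0) (𝓝 0) := by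
  have := (tendsto_log_mul_rpow_nhdsGT_zero two_pos).neg
  rw [neg_zero] at this
  exact this.congr fun ε => by rw [rpow_two]; ring

theorem tendsto_log_one_add_div_self : Tendsto (fun y => log (1 + y) / y) (𝓝[≠] 0) (𝓝 1) := by
  have h : HasDerivAt (fun y => log (1 + y)) 1 0 := by
    simpa using ((hasDerivAt_id (0 : ℝ)).const_add 1).log (by norm_num)
  refine (hasDerivAt_iff_tendsto_slope.1 h).congr fun y => ?_
  simp [slope_def_field]

theorem tendsto_log_div_log (hc : 0 < c) :
    Tendsto (fun ε => log (c * (ε ^ 2 * -log ε)) / log ε) (𝓝[>] 0) (𝓝 2) := by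
  have hL : Tendsto (fun ε => -log ε) (𝓝[>] 0) atTop :=
    tendsto_neg_atBot_atTop.comp tendsto_log_nhdsGT_zero
  have hlim := ((tendsto_const_nhds (x := log c)).div_atBot tendsto_log_nhdsGT_zero).add
    ((tendsto_const_nhds (x := (2 : ℝ))).add
      ((tendsto_pow_log_div_mul_add_atTop (-1) 0 1 (by norm_num)).comp hL))
  rw [zero_add, add_zero] at hlim
  refine hlim.congr' ?_
  filter_upwards [Ioo_mem_nhdsGT one_pos] with ε ⟨hε0, hε1⟩
  have hlog : log ε < 0 := log_neg hε0 hε1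
  rw [log_mul hc.ne' (mul_pos (by positivity) (by linarith)).ne', log_mul (by positivity)
    (by linarith), log_pow]
  have := hlog.ne
  simp only [Function.comp_apply, pow_one, neg_mul, one_mul, neg_neg, add_zero]
  field_simp
  ring

theorem tendsto_q_sub_div (ha : a ≠ 0) (hc : 0 < c) :
    Tendsto (fun ε => (q a ε (c * (ε ^ 2 * -log ε)) - a) / (ε ^ 2 * -log ε)) (𝓝[>] 0)
      (𝓝 (1 / (2 * π))) := by
  have hL : Tendsto (fun ε => -log ε) (𝓝[>] 0) atTop :=
    tendsto_neg_atBot_atTop.comp tendsto_log_nhdsGT_zero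
  have hlim := ((tendsto_inv_atTop_zero.comp hL).const_mul (1 / a)).add
    ((tendsto_log_div_log hc).div_const (4 * π))
  rw [mul_zero, zero_add, show (2 : ℝ) / (4 * π) = 1 / (2 * π) by field_simp; ring] at hlim
  refine hlim.congr' ?_
  filter_upwards [Ioo_mem_nhdsGT one_pos] with ε ⟨hε0, hε1⟩
  have := (log_neg hε0 hε1).ne
  simp only [q, Function.comp_apply]
  field_simp
  ring

theorem eventually_sq_mul_neg_log_pos : ∀ᶠ ε in 𝓝[>] (0 : ℝ), 0 < ε ^ 2 * -log ε := by
  filter_upwards [Ioo_mem_nhdsGT one_pos] with ε ⟨hε0, hε1⟩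
  exact mul_pos (by positivity) (neg_pos.2 (log_neg hε0 hε1))

theorem eventually_mul_sq_mul_neg_log_lt (c : ℝ) {b : ℝ} (hb : 0 < b) :
    ∀ᶠ ε in 𝓝[>] (0 : ℝ), c * (ε ^ 2 * -log ε) < b := by
  have h := tendsto_sq_mul_neg_log.const_mul c
  rw [mul_zero] at h
  exact h.eventually (eventually_lt_nhds hb)

theorem tendsto_p_mul_q_sub_one_div (ha : a ≠ 0) (hc : 0 < c) :
    Tendsto (fun ε => (p a (c * (ε ^ 2 * -log ε)) * q a ε (c * (ε ^ 2 * -log ε)) - 1) /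
      (ε ^ 2 * -log ε)) (𝓝[>] 0) (𝓝 (a / (4 * π) * (2 / a ^ 2 - c))) := by
  have hs := tendsto_sq_mul_neg_log
  have hpos := eventually_sq_mul_neg_log_pos
  have hQ := tendsto_q_sub_div ha hc
  have hq : Tendsto (fun ε => q a ε (c * (ε ^ 2 * -log ε))) (𝓝[>] 0) (𝓝 a) := by
    have := tendsto_const_nhds (x := a) |>.add (hs.mul hQ)
    rw [zero_mul, add_zero] at this
    refine this.congr' ?_
    filter_upwards [hpos] with ε hε
    rw [mul_div_cancel₀ _ hε.ne', add_sub_cancel]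
  have hR : Tendsto (fun ε => log (1 + c * (ε ^ 2 * -log ε)) / (c * (ε ^ 2 * -log ε)))
      (𝓝[>] 0) (𝓝 1) := by
    refine tendsto_log_one_add_div_self.comp (tendsto_nhdsWithin_iff.2 ⟨?_, ?_⟩)
    · simpa using hs.const_mul c
    · filter_upwards [hpos] with ε hε using (mul_pos hc hε).ne'
  have hlim := (hQ.div_const a).sub (((hR.const_mul c).mul hq).div_const (4 * π))
  rw [show 1 / (2 * π) / a - c * 1 * a / (4 * π) = a / (4 * π) * (2 / a ^ 2 - c) by
    field_simp; ring] at hlim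
  refine hlim.congr' ?_
  filter_upwards [hpos] with ε hε
  have := (mul_pos hc hε).ne'
  simp only [p]
  field_simp
  ring

theorem eventually_mul_lt_smallRoot (ha : 0 < a) (hc : 0 < c) (hca : c < 2 / a ^ 2) :
    ∀ᶠ ε in 𝓝[>] 0, c * (ε ^ 2 * -log ε) < smallRoot a ε := by
  have hlim : 0 < a / (4 * π) * (2 / a ^ 2 - c) := mul_pos (by positivity) (sub_pos.2 hca)
  filter_upwards [(tendsto_p_mul_q_sub_one_div ha.ne' hc).eventually (eventually_gt_nhds hlim),
    eventually_mul_sq_mul_neg_log_lt c (pZero_pos ha), eventually_sq_mul_neg_log_pos,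
    self_mem_nhdsWithin] with ε h hS hs (hε : 0 < ε)
  rw [lt_smallRoot_iff ha hε.ne' (mul_pos hc hs) hS]
  linarith [(lt_div_iff₀ hs).1 h]

theorem eventually_smallRoot_lt_mul (ha : 0 < a) (hca : 2 / a ^ 2 < c) :
    ∀ᶠ ε in 𝓝[>] 0, smallRoot a ε < c * (ε ^ 2 * -log ε) := by
  have hc : 0 < c := lt_trans (by positivity) hca
  have hlim : a / (4 * π) * (2 / a ^ 2 - c) < 0 :=
    mul_neg_of_pos_of_neg (by positivity) (sub_neg.2 hca)
  filter_upwards [(tendsto_p_mul_q_sub_one_div ha.ne' hc).eventually (eventually_lt_nhds hlim),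
    eventually_mul_sq_mul_neg_log_lt c (pZero_pos ha), eventually_sq_mul_neg_log_pos,
    self_mem_nhdsWithin] with ε h hS hs (hε : 0 < ε)
  rw [smallRoot_lt_iff ha hε.ne' (mul_pos hc hs) hS]
  linarith [(div_lt_iff₀ hs).1 h]

theorem tendsto_smallRoot_div (ha : 0 < a) :
    Tendsto (fun ε => smallRoot a ε / (ε ^ 2 * -log ε)) (𝓝[>] 0) (𝓝 (2 / a ^ 2)) := by
  have h2a : 1 / a ^ 2 < 2 / a ^ 2 := by gcongr; norm_num
  refine tendsto_order.2 ⟨fun c hc => ?_, fun c hc => ?_⟩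
  · filter_upwards [eventually_mul_lt_smallRoot ha (lt_max_of_lt_right (by positivity))
      (max_lt hc h2a), eventually_sq_mul_neg_log_pos] with ε h hs
    rw [lt_div_iff₀ hs]
    exact (mul_le_mul_of_nonneg_right (le_max_left _ _) hs.le).trans_lt h
  · filter_upwards [eventually_smallRoot_lt_mul ha hc, eventually_sq_mul_neg_log_pos] with ε h hs
    rwa [div_lt_iff₀ hs]

theorem eventually_abs_smallRoot_sub_le (ha : 0 < a) {δ : ℝ} (hδ : 0 < δ) :
    ∀ᶠ ε in 𝓝[>] 0,
      abs (smallRoot a ε - 2 / a ^ 2 * ε ^ 2 * |log ε|) ≤ δ * (ε ^ 2 * |log ε|) := by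
  filter_upwards [(tendsto_smallRoot_div ha).eventually (Metric.closedBall_mem_nhds _ hδ),
    eventually_sq_mul_neg_log_pos, Ioo_mem_nhdsGT one_pos] with ε h hs ⟨hε0, hε1⟩
  rw [dist_eq] at h
  have hid : smallRoot a ε - 2 / a ^ 2 * ε ^ 2 * -log ε =
      (smallRoot a ε / (ε ^ 2 * -log ε) - 2 / a ^ 2) * (ε ^ 2 * -log ε) := by
    rw [sub_mul, div_mul_cancel₀ _ hs.ne']
    ring
  rw [abs_of_neg (log_neg hε0 hε1), hid, abs_mul, abs_of_pos hs]
  exact mul_le_mul_of_nonneg_right h hs.le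

end

end TwoChannel

open TwoChannel

/-- d = 2, θ₀ = 0, c = 0: for small ε the equation
`ln(1+λ)/(4π) = 1/a + 1/(ε²·ln λ/(4π) − a − ε²/a)` (λ > 0) has exactly two
solutions: one in `(exp(4π(a/ε² + 1/a)), ∞)`, the other `λ_ε` in
`(0, exp(4π/a))`, with `λ_ε = (2/a²)ε²|ln ε| + o(ε²|ln ε|)` as ε → 0. -/
theorem two_eigenvalues_d2_offdiagonal (a : ℝ)
    (ha : a = 2 * Real.pi / (Real.log 2 - Real.eulerMascheroniConstant)) :
    ∃ ε₀ > (0 : ℝ), ∃ Λ : ℝ → ℝ,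
      (∀ ε : ℝ, 0 < ε → ε < ε₀ →
        ∃ lam₁ : ℝ,
          Real.exp (4 * Real.pi * (a / ε ^ 2 + 1 / a)) < lam₁ ∧
          Real.log (1 + lam₁) / (4 * Real.pi) =
            1 / a + 1 / (ε ^ 2 * Real.log lam₁ / (4 * Real.pi) - a - ε ^ 2 / a) ∧
          0 < Λ ε ∧ Λ ε < Real.exp (4 * Real.pi / a) ∧
          Real.log (1 + Λ ε) / (4 * Real.pi) =
            1 / a + 1 / (ε ^ 2 * Real.log (Λ ε) / (4 * Real.pi) - a - ε ^ 2 / a) ∧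
          lam₁ ≠ Λ ε ∧
          (∀ lam : ℝ, 0 < lam →
            Real.log (1 + lam) / (4 * Real.pi) =
              1 / a + 1 / (ε ^ 2 * Real.log lam / (4 * Real.pi) - a - ε ^ 2 / a) →
            lam = lam₁ ∨ lam = Λ ε)) ∧
      (∀ δ > (0 : ℝ), ∃ ε₁ > (0 : ℝ), ∀ ε : ℝ, 0 < ε → ε < ε₁ → ε < ε₀ →
        abs (Λ ε - 2 / a ^ 2 * ε ^ 2 * |Real.log ε|) ≤ δ * (ε ^ 2 * |Real.log ε|)) := by
  have ha0 : 0 < a := by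
    have := eulerMascheroniConstant_lt_two_thirds
    have := log_two_gt_d9
    exact ha ▸ div_pos (by positivity) (by linarith)
  refine ⟨1, one_pos, smallRoot a, fun ε hε _ => ?_, fun δ hδ => ?_⟩
  · have hroot {x : ℝ} (hx : 0 < x) := secularEq_iff_eq_smallRoot_or_eq_largeRoot ha0 hε.ne' hx
    obtain ⟨hS0, hS, -⟩ := smallRoot_spec ha0 hε.ne'
    have hSL : smallRoot a ε < largeRoot a ε :=
      (hS.trans (pZero_lt_qZero ha0.le ε)).trans (largeRoot_spec hε.ne').1
    exact ⟨largeRoot a ε, (largeRoot_spec hε.ne').1, (hroot (hS0.trans hSL)).2 (.inr rfl), hS0,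
      hS.trans (pZero_lt_exp a), (hroot hS0).2 (.inl rfl), hSL.ne',
      fun lam hlam h => ((hroot hlam).1 h).symm⟩
  · obtain ⟨ε₁, hε₁, hsub⟩ :=
      mem_nhdsGT_iff_exists_Ioo_subset.1 (eventually_abs_smallRoot_sub_le ha0 hδ)
    exact ⟨ε₁, hε₁, fun ε h0 h1 _ => hsub ⟨h0, h1⟩⟩
end

section
/- Let c > 0 and θ₀ ∈ ℝ. Consider the equation 1 + (θ₀/(4π))√λ = [(1 + (θ₀/(4π))√λ)(1 − cε/(4π)) + (ε²/(4π)²)√λ]·√(1+λ) for λ > 0. Then there exist C > 0 and ε₀ > 0 such that for all 0 < ε < ε₀ the equation has a solution λ_ε > 0 with |λ_ε − cε/(2π)| ≤ C·ε²; equivalently, the Hamiltonian has an isolated eigenvalue E_ε = −λ_ε with E_ε = −cε/(2π) + O(ε²). -/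
private lemma aux_sqrt_upper (x : ℝ) (hx : 0 ≤ x) : Real.sqrt (1+x) ≤ 1 + x/2 := by
  rw [show (1:ℝ)+x/2 = Real.sqrt ((1+x/2)^2) from (Real.sqrt_sq (by linarith)).symm]
  exact Real.sqrt_le_sqrt (by nlinarith)

private lemma aux_sqrt_lower (x : ℝ) (hx : 0 ≤ x) (hx1 : x ≤ 1) :
    1 + x/2 - x^2/8 ≤ Real.sqrt (1+x) := by
  apply Real.le_sqrt_of_sq_le
  nlinarith [pow_nonneg hx 3, mul_nonneg (pow_nonneg hx 3) (sub_nonneg.2 hx1)]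

private lemma aux_hkb2 (K s B E : ℝ) (hK : 0 ≤ K) (hs : 0 ≤ s) (hs2 : s^2 = B)
    (hBE : B ≤ E) (hKE : K^2*E ≤ 1/4) : K*s ≤ 1/2 := by
  nlinarith [mul_nonneg hK hs, mul_le_mul_of_nonneg_left hBE (sq_nonneg K)]

private lemma aux_hga (k sa sb : ℝ) (hsa0 : 0 ≤ sa) (hsab : sa ≤ sb)
    (hkb2 : |k| * sb ≤ 1/2) : 1/2 ≤ 1 + k*sa := by
  have h := neg_abs_le (k*sa)
  rw [abs_mul, abs_of_nonneg hsa0] at h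
  have h2 : |k| * sa ≤ |k| * sb := mul_le_mul_of_nonneg_left hsab (abs_nonneg k)
  linarith

private lemma aux_hfaca (m C ε a ta : ℝ) (hm_pos : 0 < m) (hm1 : 0 ≤ 1-m)
    (hta_ub : ta ≤ 1 + a/2) (ha : a = 2*m - C*ε^2) (ha_pos : 0 < a) :
    C*ε^2/2 ≤ 1 - (1-m)*ta := by
  have s1 : (1-m)*ta ≤ (1-m)*(1+a/2) := mul_le_mul_of_nonneg_left hta_ub hm1
  have e : (1-m)*(1+a/2) = 1 + a/2 - m - m*(a/2) := by ring
  have hma : 0 ≤ m*(a/2) := mul_nonneg hm_pos.le (by linarith)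
  have ha2 : a/2 = m - C*ε^2/2 := by rw [ha]; ring
  linarith

private lemma aux_p2 (q sa ta ε : ℝ) (hq0 : 0 ≤ q) (hq144 : q ≤ ε^2/144)
    (hsa0 : 0 ≤ sa) (hsa1 : sa ≤ 1) (hta0 : 0 ≤ ta) (hta32 : ta ≤ 3/2) :
    q*sa*ta ≤ ε^2/96 := by
  have h1 : q*sa ≤ ε^2/144 := by nlinarith
  have h2 : q*sa*ta ≤ (ε^2/144)*(3/2) :=
    mul_le_mul h1 hta32 hta0 (by nlinarith [sq_nonneg ε])
  linarith

private lemma aux_hFa (k m q C sa ta ε : ℝ) (hga : 1/2 ≤ 1+k*sa)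
    (hfaca : C*ε^2/2 ≤ 1-(1-m)*ta) (hp2 : q*sa*ta ≤ ε^2/96) (hC1 : 1 ≤ C) :
    0 ≤ (1+k*sa) - ((1+k*sa)*(1-m) + q*sa)*ta := by
  have p1 : (1/2)*(C*ε^2/2) ≤ (1+k*sa)*(1-(1-m)*ta) :=
    mul_le_mul hga hfaca (by nlinarith [sq_nonneg ε]) (by linarith)
  linarith [p1, sq_nonneg ε, mul_le_mul_of_nonneg_right hC1 (sq_nonneg ε), hp2]

private lemma aux_hfacb (c ε m C b tb : ℝ)
    (hm_pos : 0 < m) (hm1 : 0 ≤ 1 - m) (htb_lb : 1 + b/2 - b^2/8 ≤ tb)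
    (hb : b = 2*m + C*ε^2) (hCe : C*ε^2 = 2*(c*ε)^2 + ε^2)
    (hb_pos : 0 < b) (hb_cε : b ≤ c*ε) (hm12 : m ≤ c*ε/12) :
    1 - (1-m)*tb ≤ -(ε^2/2) := by
  have hce : 0 ≤ c*ε := le_trans hb_pos.le hb_cε
  have s1 : (1-m)*(1 + b/2 - b^2/8) ≤ (1-m)*tb := mul_le_mul_of_nonneg_left htb_lb hm1
  have s2 : b^2 ≤ (c*ε)^2 := pow_le_pow_left₀ hb_pos.le hb_cε 2
  have s3 : m*b ≤ (c*ε/12)*(c*ε) := mul_le_mul hm12 hb_cε hb_pos.le (by linarith)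
  have s4 : 0 ≤ m*b^2 := mul_nonneg hm_pos.le (sq_nonneg b)
  have e2 : 1 - (1-m)*(1+b/2-b^2/8) = m - b/2 + b^2/8 + m*(b/2) - m*(b^2/8) := by ring
  have hb2 : b/2 = m + C*ε^2/2 := by rw [hb]; ring
  have hcc : 0 ≤ (c*ε)^2 := sq_nonneg _
  linarith [s1, s2, s3, s4, e2, hb2, hcc, hCe]

private lemma aux_hFb (k m q sb tb ε : ℝ) (hgb : 1/2 ≤ 1 + k*sb)
    (hfacb : 1 - (1-m)*tb ≤ -(ε^2/2)) (hq0 : 0 ≤ q) (hsb0 : 0 ≤ sb) (htb0 : 0 ≤ tb) :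
    (1 + k*sb) - ((1 + k*sb)*(1-m) + q*sb)*tb ≤ 0 := by
  have p1 : 0 ≤ (1 + k*sb - 1/2) * (-(1 - (1-m)*tb)) :=
    mul_nonneg (by linarith) (by nlinarith [sq_nonneg ε])
  have p2 : 0 ≤ q*sb*tb := mul_nonneg (mul_nonneg hq0 hsb0) htb0
  nlinarith [p1, p2, sq_nonneg ε]

set_option maxHeartbeats 2000000 in
/-- d = 3, c > 0 (negative perturbation): for small ε the equation
`1 + (θ₀/(4π))√λ = [(1 + (θ₀/(4π))√λ)(1 − cε/(4π)) + (ε²/(4π)²)√λ]·√(1+λ)`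
has a solution `λ_ε > 0` with `|λ_ε − cε/(2π)| ≤ Cε²`; i.e. the Hamiltonian
has an isolated eigenvalue `E_ε = −λ_ε = −cε/(2π) + O(ε²)`. -/
theorem isolated_eigenvalue_d3_negative_perturbation (c θ₀ : ℝ) (hc : 0 < c) :
    ∃ C > (0 : ℝ), ∃ ε₀ > (0 : ℝ), ∀ ε : ℝ, 0 < ε → ε < ε₀ →
      ∃ lam : ℝ, 0 < lam ∧
        1 + θ₀ / (4 * Real.pi) * Real.sqrt lam =
          ((1 + θ₀ / (4 * Real.pi) * Real.sqrt lam) * (1 - c * ε / (4 * Real.pi)) +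
            ε ^ 2 / (4 * Real.pi) ^ 2 * Real.sqrt lam) * Real.sqrt (1 + lam) ∧
        |lam - c * ε / (2 * Real.pi)| ≤ C * ε ^ 2 := by
  have hπ3 : (3:ℝ) < Real.pi := Real.pi_gt_three
  have hπ4 : Real.pi < 3.15 := Real.pi_lt_d2
  have hπ : (0:ℝ) < Real.pi := by linarith
  obtain ⟨k, hk⟩ : ∃ k : ℝ, k = θ₀ / (4 * Real.pi) := ⟨_, rfl⟩
  have hkabs : (0:ℝ) ≤ |k| := abs_nonneg k
  obtain ⟨C, hC⟩ : ∃ C : ℝ, C = 2*c^2 + 1 := ⟨_, rfl⟩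
  have hC1 : (1:ℝ) ≤ C := by nlinarith
  have hCpos : (0:ℝ) < C := by linarith
  refine ⟨C, hCpos,
    min (c/(4*Real.pi*C)) (min (1/(2*c)) (1/(4*c*(|k|+1)^2))),
    lt_min (by positivity) (lt_min (by positivity) (by positivity)), ?_⟩
  intro ε hε hεlt
  have h1 : ε < c/(4*Real.pi*C) := lt_of_lt_of_le hεlt (min_le_left _ _)
  have h2 : ε < 1/(2*c) := lt_of_lt_of_le hεlt ((min_le_right _ _).trans (min_le_left _ _))
  have h3 : ε < 1/(4*c*(|k|+1)^2) :=
    lt_of_lt_of_le hεlt ((min_le_right _ _).trans (min_le_right _ _))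
  obtain ⟨m, hm⟩ : ∃ m : ℝ, m = c * ε / (4 * Real.pi) := ⟨_, rfl⟩
  obtain ⟨q, hq⟩ : ∃ q : ℝ, q = ε ^ 2 / (4 * Real.pi) ^ 2 := ⟨_, rfl⟩
  have hm_pos : 0 < m := by rw [hm]; positivity
  have hq_pos : 0 < q := by rw [hq]; positivity
  -- basic bounds
  have hcε : c * ε < 1/2 := by
    rw [lt_div_iff₀ (by positivity)] at h2; nlinarith
  have hm12 : m ≤ c*ε/12 := by
    rw [hm, div_le_div_iff₀ (by positivity) (by norm_num)]
    nlinarith [mul_pos hc hε]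
  have hπsq : (9:ℝ) ≤ Real.pi^2 := by nlinarith
  have hq144 : q ≤ ε^2/144 := by
    rw [hq, div_le_div_iff₀ (by positivity) (by norm_num)]
    nlinarith [sq_nonneg ε, hπsq]
  have hCε2 : C * ε^2 ≤ m := by
    rw [lt_div_iff₀ (by positivity)] at h1
    rw [hm, le_div_iff₀ (by positivity)]
    nlinarith [mul_le_mul_of_nonneg_left h1.le hε.le]
  have hkb : |k|^2 * (c*ε) ≤ 1/4 := by
    rw [lt_div_iff₀ (by positivity)] at h3
    nlinarith [mul_pos hc hε, sq_nonneg (|k|+1), hkabs,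
      mul_le_mul_of_nonneg_left h3.le (mul_nonneg (mul_pos hc hε).le (sq_nonneg |k|))]
  -- the interval
  obtain ⟨a, ha⟩ : ∃ a : ℝ, a = 2*m - C*ε^2 := ⟨_, rfl⟩
  obtain ⟨b, hb⟩ : ∃ b : ℝ, b = 2*m + C*ε^2 := ⟨_, rfl⟩
  have hε2 : 0 ≤ C*ε^2 := by positivity
  have ha_pos : 0 < a := by rw [ha]; linarith
  have hb_pos : 0 < b := by rw [hb]; linarith
  have hab : a ≤ b := by rw [ha, hb]; linarith
  have hb_cε : b ≤ c*ε := by rw [hb]; linarith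
  have hb1 : b ≤ 1 := by linarith
  have ha1 : a ≤ 1 := by linarith
  have hm1 : (0:ℝ) ≤ 1 - m := by linarith [hm12, hcε]
  -- square-root facts
  have hsa0 : 0 ≤ Real.sqrt a := Real.sqrt_nonneg a
  have hsb0 : 0 ≤ Real.sqrt b := Real.sqrt_nonneg b
  have hsb_sq : Real.sqrt b ^ 2 = b := Real.sq_sqrt hb_pos.le
  have hsab : Real.sqrt a ≤ Real.sqrt b := Real.sqrt_le_sqrt hab
  have hsb1 : Real.sqrt b ≤ 1 := by
    rw [show (1:ℝ) = Real.sqrt 1 from Real.sqrt_one.symm]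
    exact Real.sqrt_le_sqrt hb1
  have hta0 : 0 ≤ Real.sqrt (1+a) := Real.sqrt_nonneg _
  have htb0 : 0 ≤ Real.sqrt (1+b) := Real.sqrt_nonneg _
  have hta1 : 1 ≤ Real.sqrt (1+a) := Real.le_sqrt_of_sq_le (by norm_num; linarith)
  have htb1 : 1 ≤ Real.sqrt (1+b) := Real.le_sqrt_of_sq_le (by norm_num; linarith)
  have hta_ub : Real.sqrt (1+a) ≤ 1 + a/2 := aux_sqrt_upper a ha_pos.le
  have htb_ub : Real.sqrt (1+b) ≤ 1 + b/2 := aux_sqrt_upper b hb_pos.le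
  have htb_lb : 1 + b/2 - b^2/8 ≤ Real.sqrt (1+b) := aux_sqrt_lower b hb_pos.le hb1
  -- |k|·√b ≤ 1/2, hence 1 + k√λ ≥ 1/2 on the interval
  have hu2 : (|k| * Real.sqrt b)^2 = |k|^2 * b := by rw [mul_pow, hsb_sq]
  have hsb_sq' : Real.sqrt b ^ 2 = b := hsb_sq
  have hkb2 : |k| * Real.sqrt b ≤ 1/2 :=
    aux_hkb2 |k| (Real.sqrt b) b (c*ε) hkabs hsb0 hsb_sq' hb_cε hkb
  have hga : (1:ℝ)/2 ≤ 1 + k * Real.sqrt a := aux_hga k _ _ hsa0 hsab hkb2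
  have hgb : (1:ℝ)/2 ≤ 1 + k * Real.sqrt b := aux_hga k _ _ hsb0 le_rfl hkb2
  -- F(a) ≥ 0
  have hfaca : C*ε^2/2 ≤ 1 - (1-m) * Real.sqrt (1+a) :=
    aux_hfaca m C ε a _ hm_pos hm1 hta_ub ha ha_pos
  have hsa1 : Real.sqrt a ≤ 1 := hsab.trans hsb1
  have hta32 : Real.sqrt (1+a) ≤ 3/2 := by linarith
  have hp2 : q * Real.sqrt a * Real.sqrt (1+a) ≤ ε^2/96 :=
    aux_p2 q _ _ ε hq_pos.le hq144 hsa0 hsa1 hta0 hta32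
  have hFa : 0 ≤ (1 + k * Real.sqrt a) -
      ((1 + k * Real.sqrt a) * (1 - m) + q * Real.sqrt a) * Real.sqrt (1+a) :=
    aux_hFa k m q C _ _ ε hga hfaca hp2 hC1
  -- F(b) ≤ 0
  have hfacb : 1 - (1-m) * Real.sqrt (1+b) ≤ -(ε^2/2) :=
    aux_hfacb c ε m C b _ hm_pos hm1 htb_lb hb (by rw [hC]; ring) hb_pos hb_cε hm12
  have hFb : (1 + k * Real.sqrt b) -
      ((1 + k * Real.sqrt b) * (1 - m) + q * Real.sqrt b) * Real.sqrt (1+b) ≤ 0 :=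
    aux_hFb k m q _ _ ε hgb hfacb hq_pos.le hsb0 htb0
  -- intermediate value theorem
  have hcont : ContinuousOn (fun l : ℝ => (1 + k * Real.sqrt l) -
      ((1 + k * Real.sqrt l) * (1 - m) + q * Real.sqrt l) * Real.sqrt (1+l))
      (Set.Icc a b) := by
    apply Continuous.continuousOn
    continuity
  have hmem : (0:ℝ) ∈ Set.Icc
      ((fun l : ℝ => (1 + k * Real.sqrt l) -
        ((1 + k * Real.sqrt l) * (1 - m) + q * Real.sqrt l) * Real.sqrt (1+l)) b)
      ((fun l : ℝ => (1 + k * Real.sqrt l) -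
        ((1 + k * Real.sqrt l) * (1 - m) + q * Real.sqrt l) * Real.sqrt (1+l)) a) :=
    ⟨hFb, hFa⟩
  obtain ⟨lam, hlam, hfl⟩ := intermediate_value_Icc' hab hcont hmem
  simp only at hfl
  obtain ⟨hla, hlb⟩ := hlam
  have h2m : c*ε/(2*Real.pi) = 2*m := by rw [hm]; field_simp; ring
  rw [← hk, ← hm, ← hq]
  refine ⟨lam, by linarith, by linarith, ?_⟩
  rw [abs_le, h2m]
  constructor
  · rw [ha] at hla; linarith
  · rw [hb] at hlb; linarith
end
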